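/- arXiv:2505.16329 — 9 statements merged into one kernel-verified Lean document; each statement's English description precedes it below -/
import Mathlib

section
/- For every σ > 0 and every c > 0, the Gaussian integral identity (1/√(2π)) ∫_{ℝ} clip_c(σ u) · u · e^{−u²/2} du = σ · erf(c/(√2 · σ)) holds. -/
open MeasureTheory Real Set Filter

/-- The error function `erf z = (2/√π) ∫₀^z e^{−t²} dt`. -/
noncomputable def erf (z : ℝ) : ℝ := 2 / Real.sqrt π * ∫ t in (0:ℝ)..z, Real.exp (-t ^ 2)

/-- The clipping function `clip_c(a) = a · min(1, c/|a|)`, with `clip_c(0) = 0`. -/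
noncomputable def clip (c a : ℝ) : ℝ := if a = 0 then 0 else a * min 1 (c / |a|)

lemma clip_mul_eq (σ c u : ℝ) (hσ : 0 < σ) :
    clip c (σ * u) * u = min (σ * |u| ^ 2) (c * |u|) := by
  rcases eq_or_ne u 0 with rfl | hu
  · simp [clip]
  · have h1 : σ * u ≠ 0 := mul_ne_zero hσ.ne' hu
    have h2 : |σ * u| = σ * |u| := by rw [abs_mul, abs_of_pos hσ]
    have h3 : (0:ℝ) < |u| := abs_pos.mpr hu
    rw [clip, if_neg h1, h2]
    have : σ * u * min 1 (c / (σ * |u|)) * u = (σ * |u| ^ 2) * min 1 (c / (σ * |u|)) := by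
      rw [sq_abs]; ring
    rw [this, mul_min_of_nonneg _ _ (by positivity), mul_one]
    congr 1
    field_simp

lemma hasDerivAt_erfInt (u : ℝ) :
    HasDerivAt (fun v : ℝ => ∫ t in (0:ℝ)..(v / Real.sqrt 2), Real.exp (-t ^ 2))
      (Real.exp (-u ^ 2 / 2) * (1 / Real.sqrt 2)) u := by
  have h2 : (0:ℝ) < Real.sqrt 2 := Real.sqrt_pos.mpr (by norm_num)
  have hcont : Continuous fun t : ℝ => Real.exp (-t ^ 2) := by continuity
  have hG : HasDerivAt (fun z : ℝ => ∫ t in (0:ℝ)..z, Real.exp (-t ^ 2))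
      (Real.exp (-(u / Real.sqrt 2) ^ 2)) (u / Real.sqrt 2) := by
    refine intervalIntegral.integral_hasDerivAt_right
      (hcont.intervalIntegrable _ _) ?_ hcont.continuousAt
    exact hcont.stronglyMeasurableAtFilter _ _
  have hlin : HasDerivAt (fun v : ℝ => v / Real.sqrt 2) (1 / Real.sqrt 2) u := by
    simpa using (hasDerivAt_id u).div_const (Real.sqrt 2)
  have := hG.comp u hlin
  exact this.congr_deriv (by rw [div_pow, Real.sq_sqrt (by norm_num : (0:ℝ) ≤ 2), neg_div])


lemma ftc_piece (σ b : ℝ) :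
    ∫ x in (0:ℝ)..b, σ * x ^ 2 * Real.exp (-x ^ 2 / 2) =
      σ * Real.sqrt 2 * (∫ t in (0:ℝ)..(b / Real.sqrt 2), Real.exp (-t ^ 2))
        - σ * b * Real.exp (-b ^ 2 / 2) := by
  have h2 : (0:ℝ) < Real.sqrt 2 := Real.sqrt_pos.mpr (by norm_num)
  set F : ℝ → ℝ := fun u =>
    σ * (Real.sqrt 2 * (∫ t in (0:ℝ)..(u / Real.sqrt 2), Real.exp (-t ^ 2))
      - u * Real.exp (-u ^ 2 / 2)) with hF
  have hderiv : ∀ u : ℝ, HasDerivAt F (σ * u ^ 2 * Real.exp (-u ^ 2 / 2)) u := by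
    intro u
    have hexp : HasDerivAt (fun v : ℝ => Real.exp (-v ^ 2 / 2))
        (Real.exp (-u ^ 2 / 2) * (-u)) u := by
      have h1 : HasDerivAt (fun v : ℝ => -v ^ 2 / 2) (-u) u := by
        have := ((hasDerivAt_pow 2 u).neg).div_const 2
        exact this.congr_deriv (by ring)
      simpa [mul_comm] using h1.exp
    have hprod : HasDerivAt (fun v : ℝ => v * Real.exp (-v ^ 2 / 2))
        (Real.exp (-u ^ 2 / 2) + u * (Real.exp (-u ^ 2 / 2) * (-u))) u := by
      exact ((hasDerivAt_id u).mul hexp).congr_deriv (by simp)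
    have := (((hasDerivAt_erfInt u).const_mul (Real.sqrt 2)).sub hprod).const_mul σ
    exact this.congr_deriv (by field_simp; ring)
  have hint : IntervalIntegrable (fun x => σ * x ^ 2 * Real.exp (-x ^ 2 / 2)) volume 0 b := by
    apply Continuous.intervalIntegrable; continuity
  have := intervalIntegral.integral_eq_sub_of_hasDerivAt (fun u _ => hderiv u) hint
  rw [this, hF]
  simp
  ring

lemma ioi_piece (c b : ℝ) (hc : 0 < c) :
    ∫ x in Ioi b, c * x * Real.exp (-x ^ 2 / 2) = c * Real.exp (-b ^ 2 / 2) := by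
  have hderiv : ∀ x ∈ Ici b, HasDerivAt (fun u : ℝ => -c * Real.exp (-u ^ 2 / 2))
      (c * x * Real.exp (-x ^ 2 / 2)) x := by
    intro x _
    have h1 : HasDerivAt (fun v : ℝ => -v ^ 2 / 2) (-x) x := by
      have := ((hasDerivAt_pow 2 x).neg).div_const 2
      exact this.congr_deriv (by ring)
    have := (h1.exp).const_mul (-c)
    exact this.congr_deriv (by ring)
  have hint : IntegrableOn (fun x => c * x * Real.exp (-x ^ 2 / 2)) (Ioi b) := by
    have h := (integrable_mul_exp_neg_mul_sq (by norm_num : (0:ℝ) < 1/2)).const_mul c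
    have heq : (fun x : ℝ => c * x * Real.exp (-x ^ 2 / 2)) =
        fun x : ℝ => c * (x * Real.exp (-(1/2) * x ^ 2)) := by
      funext x; ring_nf
    rw [heq]
    exact h.integrableOn
  have htend : Tendsto (fun u : ℝ => -c * Real.exp (-u ^ 2 / 2)) atTop (nhds 0) := by
    have h1 : Tendsto (fun u : ℝ => -u ^ 2 / 2) atTop atBot := by
      apply Tendsto.atBot_div_const (by norm_num)
      exact tendsto_neg_atTop_atBot.comp (tendsto_pow_atTop (by norm_num : 2 ≠ 0))
    have := (Real.tendsto_exp_atBot.comp h1).const_mul (-c)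
    simpa using this
  have := integral_Ioi_of_hasDerivAt_of_tendsto' hderiv hint htend
  rw [this]
  ring

/-- Gaussian integral identity for the descent reduction factor of clipped GD:
`(1/√(2π)) ∫ clip_c(σu) · u · e^{−u²/2} du = σ · erf(c/(√2·σ))`. -/
theorem gaussian_clip_first_moment (σ c : ℝ) (hσ : 0 < σ) (hc : 0 < c) :
    (1 / Real.sqrt (2 * π)) * ∫ u : ℝ, clip c (σ * u) * u * Real.exp (-u ^ 2 / 2) =
      σ * erf (c / (Real.sqrt 2 * σ)) := by
  have h2 : (0:ℝ) < Real.sqrt 2 := Real.sqrt_pos.mpr (by norm_num)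
  set b : ℝ := c / σ with hbdef
  have hbpos : 0 < b := div_pos hc hσ
  have hσb : σ * b = c := by rw [hbdef]; field_simp
  set f : ℝ → ℝ := fun x => min (σ * x ^ 2) (c * x) * Real.exp (-x ^ 2 / 2) with hfdef
  have hfc : Continuous f := by
    exact ((continuous_const.mul (continuous_pow 2)).min
      (continuous_const.mul continuous_id)).mul (by continuity)
  have step1 : (fun u : ℝ => clip c (σ * u) * u * Real.exp (-u ^ 2 / 2)) =
      fun u : ℝ => f |u| := by
    funext u
    simp only [hfdef, clip_mul_eq σ c u hσ, sq_abs]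
  have int2 : IntegrableOn (fun x => c * x * Real.exp (-x ^ 2 / 2)) (Ioi b) := by
    have h := (integrable_mul_exp_neg_mul_sq (by norm_num : (0:ℝ) < 1/2)).const_mul c
    have heq : (fun x : ℝ => c * x * Real.exp (-x ^ 2 / 2)) =
        fun x : ℝ => c * (x * Real.exp (-(1/2) * x ^ 2)) := by
      funext x; ring_nf
    rw [heq]
    exact h.integrableOn
  have eqIoi : EqOn (fun x => c * x * Real.exp (-x ^ 2 / 2)) f (Ioi b) := by
    intro x hx
    have hx' : b < x := hx
    have hxpos : 0 < x := hbpos.trans hx'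
    have hcx : c < σ * x := by
      rw [hbdef] at hx'
      calc c = σ * b := hσb.symm
      _ < σ * x := by exact (mul_lt_mul_iff_right₀ hσ).mpr hx'
    rw [hfdef]
    simp only
    rw [min_eq_right (by nlinarith)]
  have eqIoc : EqOn f (fun x => σ * x ^ 2 * Real.exp (-x ^ 2 / 2)) (Ioc 0 b) := by
    intro x hx
    obtain ⟨hx0, hxb⟩ := hx
    have : σ * x ≤ c := by
      calc σ * x ≤ σ * b := (mul_le_mul_iff_right₀ hσ).mpr hxb
      _ = c := hσb
    rw [hfdef]
    simp only
    rw [min_eq_left (by nlinarith)]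
  have int1 : IntegrableOn f (Ioc 0 b) := hfc.integrableOn_Ioc
  have int2' : IntegrableOn f (Ioi b) := int2.congr_fun eqIoi measurableSet_Ioi
  rw [step1, integral_comp_abs]
  rw [← Ioc_union_Ioi_eq_Ioi hbpos.le,
    setIntegral_union Ioc_disjoint_Ioi_same measurableSet_Ioi int1 int2']
  rw [setIntegral_congr_fun measurableSet_Ioc eqIoc,
    setIntegral_congr_fun measurableSet_Ioi eqIoi.symm]
  rw [← intervalIntegral.integral_of_le hbpos.le, ftc_piece σ b, ioi_piece c b hc, hσb]
  have hbound : c / (Real.sqrt 2 * σ) = b / Real.sqrt 2 := by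
    rw [hbdef, div_div, mul_comm σ (Real.sqrt 2)]
  rw [erf, hbound]
  rw [Real.sqrt_mul (by norm_num : (0:ℝ) ≤ 2) π]
  have hπ : (0:ℝ) < Real.sqrt π := Real.sqrt_pos.mpr Real.pi_pos
  field_simp
  ring
end

section
/- For every σ > 0 and every c > 0, the Gaussian integral identity (1/√(2π)) ∫_{ℝ} clip_c(σ u)² · e^{−u²/2} du = c² (1 − erf(c/(√2 · σ))) + σ² F(c/σ) holds, where F(z) := erf(z/√2) − √(2/π) · z · e^{−z²/2}. -/
open MeasureTheory Real

/-- `F(z) = erf(z/√2) − √(2/π) · z · e^{−z²/2}`. -/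
noncomputable def F (z : ℝ) : ℝ :=
  erf (z / Real.sqrt 2) - Real.sqrt (2 / π) * z * Real.exp (-z ^ 2 / 2)

lemma clip_sq (c a : ℝ) (hc : 0 < c) : (clip c a) ^ 2 = min (a ^ 2) (c ^ 2) := by
  unfold clip
  rcases eq_or_ne a 0 with h | h
  · simp [h, min_eq_left (by positivity : (0:ℝ) ≤ c ^ 2)]
  · have ha : 0 < |a| := abs_pos.mpr h
    rcases le_or_gt (|a|) c with hle | hlt
    · have h1 : (1:ℝ) ≤ c / |a| := (one_le_div ha).mpr hle
      have h2 : a ^ 2 ≤ c ^ 2 := by nlinarith [sq_abs a, abs_nonneg a]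
      rw [if_neg h, min_eq_left h1, min_eq_left h2, mul_one]
    · have h1 : c / |a| ≤ 1 := (div_le_one ha).mpr hlt.le
      have h2 : c ^ 2 ≤ a ^ 2 := by nlinarith [sq_abs a]
      rw [if_neg h, min_eq_right h1, min_eq_right h2, mul_pow, div_pow, sq_abs]
      field_simp

lemma integrable_gauss : Integrable (fun u : ℝ => Real.exp (-u ^ 2 / 2)) := by
  have := integrable_exp_neg_mul_sq (by norm_num : (0:ℝ) < 1/2)
  refine this.congr ?_
  filter_upwards with u
  ring_nf

lemma integral_gauss : ∫ u : ℝ, Real.exp (-u ^ 2 / 2) = Real.sqrt (2 * π) := by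
  have h := integral_gaussian (1/2 : ℝ)
  have e : (fun u : ℝ => Real.exp (-u ^ 2 / 2)) = fun u : ℝ => Real.exp (-(1/2:ℝ) * u ^ 2) := by
    funext u; ring_nf
  rw [e, h, show π / (1/2 : ℝ) = 2 * π by ring]

lemma intA (z : ℝ) : ∫ u in (-z)..z, Real.exp (-u ^ 2 / 2)
    = Real.sqrt (2 * π) * erf (z / Real.sqrt 2) := by
  have h2 : (Real.sqrt 2) ≠ 0 := by positivity
  have key : ∀ u : ℝ, Real.exp (-u ^ 2 / 2) = Real.exp (-(u / Real.sqrt 2) ^ 2) := by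
    intro u
    rw [div_pow, Real.sq_sqrt (by norm_num : (0:ℝ) ≤ 2)]
    ring_nf
  rw [intervalIntegral.integral_congr (fun u _ => key u),
    show (∫ x in (-z)..z, Real.exp (-(x / Real.sqrt 2) ^ 2))
        = Real.sqrt 2 • ∫ t in (-z / Real.sqrt 2)..(z / Real.sqrt 2), Real.exp (-t ^ 2) from
      intervalIntegral.integral_comp_div (a := -z) (b := z) (c := Real.sqrt 2)
        (fun t => Real.exp (-t ^ 2)) h2]
  have heven : ∫ t in (-z / Real.sqrt 2)..(z / Real.sqrt 2), Real.exp (-t ^ 2)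
      = 2 * ∫ t in (0:ℝ)..(z / Real.sqrt 2), Real.exp (-t ^ 2) := by
    set w := z / Real.sqrt 2 with hw
    have hint : ∀ a b : ℝ, IntervalIntegrable (fun t : ℝ => Real.exp (-t ^ 2)) volume a b :=
      fun a b => (Continuous.intervalIntegrable (by continuity) a b)
    rw [show -z / Real.sqrt 2 = -w by rw [hw]; ring,
      ← intervalIntegral.integral_add_adjacent_intervals (hint (-w) 0) (hint 0 w)]
    have e2 : ∫ t in (-w)..(0:ℝ), Real.exp (-t ^ 2) = ∫ t in (0:ℝ)..w, Real.exp (-t ^ 2) := by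
      have h3 := intervalIntegral.integral_comp_neg (a := 0) (b := w) (fun t : ℝ => Real.exp (-t ^ 2))
      simp only [neg_neg, neg_zero] at h3
      rw [← h3]
      apply intervalIntegral.integral_congr
      intro t _; ring_nf
    rw [e2]; ring
  rw [heven, erf, smul_eq_mul]
  have hs : Real.sqrt 2 * Real.sqrt π = Real.sqrt (2 * π) := (Real.sqrt_mul (by norm_num : (0:ℝ) ≤ 2) π).symm
  have hπ : (0:ℝ) < Real.sqrt π := Real.sqrt_pos.mpr Real.pi_pos
  have hs' : Real.sqrt (π * 2) = Real.sqrt 2 * Real.sqrt π := by rw [mul_comm]; exact hs.symm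
  field_simp [← hs]
  ring_nf
  rw [hs']
  ring

lemma intB (z : ℝ) : ∫ u in (-z)..z, u ^ 2 * Real.exp (-u ^ 2 / 2)
    = (∫ u in (-z)..z, Real.exp (-u ^ 2 / 2)) - 2 * z * Real.exp (-z ^ 2 / 2) := by
  have hder : ∀ u : ℝ, HasDerivAt (fun u : ℝ => -u * Real.exp (-u ^ 2 / 2))
      (u ^ 2 * Real.exp (-u ^ 2 / 2) - Real.exp (-u ^ 2 / 2)) u := by
    intro u
    have h1 : HasDerivAt (fun u : ℝ => -u ^ 2 / 2) (-u) u := by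
      have := ((hasDerivAt_pow 2 u).neg).div_const 2
      simpa using this.congr_deriv (by push_cast; ring)
    have h2 : HasDerivAt (fun u : ℝ => Real.exp (-u ^ 2 / 2)) (Real.exp (-u ^ 2 / 2) * (-u)) u :=
      (Real.hasDerivAt_exp _).comp u h1
    have h3 := ((hasDerivAt_neg u).mul h2)
    exact h3.congr_deriv (by ring)
  have hii : IntervalIntegrable
      (fun u : ℝ => u ^ 2 * Real.exp (-u ^ 2 / 2) - Real.exp (-u ^ 2 / 2)) volume (-z) z :=
    Continuous.intervalIntegrable (by fun_prop) _ _
  have hfc := intervalIntegral.integral_eq_sub_of_hasDerivAt (fun u _ => hder u) hii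
  have i1 : IntervalIntegrable (fun u : ℝ => u ^ 2 * Real.exp (-u ^ 2 / 2)) volume (-z) z :=
    Continuous.intervalIntegrable (by fun_prop) _ _
  have i2 : IntervalIntegrable (fun u : ℝ => Real.exp (-u ^ 2 / 2)) volume (-z) z :=
    Continuous.intervalIntegrable (by fun_prop) _ _
  have hsub := intervalIntegral.integral_sub i1 i2
  rw [hsub, show ((-z:ℝ)) ^ 2 = z ^ 2 by ring] at hfc
  linarith [hfc]


/-- Gaussian integral identity for the variance reduction factor of clipped GD:
`(1/√(2π)) ∫ clip_c(σu)² · e^{−u²/2} du = c²(1 − erf(c/(√2·σ))) + σ² F(c/σ)`. -/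
theorem gaussian_clip_second_moment (σ c : ℝ) (hσ : 0 < σ) (hc : 0 < c) :
    (1 / Real.sqrt (2 * π)) * ∫ u : ℝ, (clip c (σ * u)) ^ 2 * Real.exp (-u ^ 2 / 2) =
      c ^ 2 * (1 - erf (c / (Real.sqrt 2 * σ))) + σ ^ 2 * F (c / σ) := by
  set b := c / σ with hbdef
  have hb : 0 < b := div_pos hc hσ
  have hcb : c = σ * b := by rw [hbdef]; field_simp
  have hint_eq : (fun u : ℝ => (clip c (σ * u)) ^ 2 * Real.exp (-u ^ 2 / 2))
      = fun u => (min ((σ * u) ^ 2) (c ^ 2) - c ^ 2) * Real.exp (-u ^ 2 / 2)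
        + c ^ 2 * Real.exp (-u ^ 2 / 2) := by
    funext u; rw [clip_sq c _ hc]; ring
  rw [hint_eq]
  have hg := integrable_gauss
  have hgc : Integrable (fun u : ℝ => c ^ 2 * Real.exp (-u ^ 2 / 2)) := hg.const_mul _
  have hd : Integrable (fun u : ℝ =>
      (min ((σ * u) ^ 2) (c ^ 2) - c ^ 2) * Real.exp (-u ^ 2 / 2)) := by
    apply hgc.mono (Continuous.aestronglyMeasurable (by fun_prop))
    filter_upwards with u
    have h0 : 0 ≤ min ((σ * u) ^ 2) (c ^ 2) := le_min (sq_nonneg _) (sq_nonneg _)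
    have h1 : min ((σ * u) ^ 2) (c ^ 2) ≤ c ^ 2 := min_le_right _ _
    have he : (0:ℝ) ≤ Real.exp (-u ^ 2 / 2) := (Real.exp_pos _).le
    simp only [norm_mul, Real.norm_eq_abs, abs_of_nonneg he, abs_of_nonneg (sq_nonneg c)]
    have habs : |min ((σ * u) ^ 2) (c ^ 2) - c ^ 2| ≤ c ^ 2 := by
      rw [abs_le]; constructor <;> nlinarith
    exact mul_le_mul_of_nonneg_right habs he
  rw [integral_add hd hgc, integral_const_mul, integral_gauss]
  have hset : ∫ u : ℝ, (min ((σ * u) ^ 2) (c ^ 2) - c ^ 2) * Real.exp (-u ^ 2 / 2)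
      = ∫ u in (-b)..b, ((σ * u) ^ 2 - c ^ 2) * Real.exp (-u ^ 2 / 2) := by
    have hvan : ∀ u ∉ Set.Ioc (-b) b,
        (min ((σ * u) ^ 2) (c ^ 2) - c ^ 2) * Real.exp (-u ^ 2 / 2) = 0 := by
      intro u hu
      simp only [Set.mem_Ioc, not_and_or, not_lt, not_le] at hu
      have habs : b ≤ |u| := by
        rcases hu with h | h
        · calc b ≤ -u := by linarith
            _ ≤ |u| := by rw [abs_eq_max_neg]; exact le_max_right _ _
        · exact h.le.trans (le_abs_self u)
      have hge : c ^ 2 ≤ (σ * u) ^ 2 := by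
        have h4 := mul_le_mul habs habs hb.le (abs_nonneg u)
        calc c ^ 2 = σ ^ 2 * (b * b) := by rw [hcb]; ring
          _ ≤ σ ^ 2 * (|u| * |u|) := by
              exact mul_le_mul_of_nonneg_left h4 (sq_nonneg σ)
          _ = (σ * u) ^ 2 := by rw [abs_mul_abs_self]; ring
      rw [min_eq_right hge, sub_self, zero_mul]
    rw [← setIntegral_eq_integral_of_forall_compl_eq_zero hvan,
      ← intervalIntegral.integral_of_le (by linarith : -b ≤ b)]
    apply intervalIntegral.integral_congr
    intro u hu
    rw [Set.uIcc_of_le (by linarith : -b ≤ b)] at hu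
    have habs : |u| ≤ b := abs_le.mpr ⟨hu.1, hu.2⟩
    have hle : (σ * u) ^ 2 ≤ c ^ 2 := by
      have h4 := mul_le_mul habs habs (abs_nonneg u) hb.le
      calc (σ * u) ^ 2 = σ ^ 2 * (|u| * |u|) := by rw [abs_mul_abs_self]; ring
        _ ≤ σ ^ 2 * (b * b) := mul_le_mul_of_nonneg_left h4 (sq_nonneg σ)
        _ = c ^ 2 := by rw [hcb]; ring
    simp only [min_eq_left hle]
  rw [hset]
  have e3 : ∀ u : ℝ, ((σ * u) ^ 2 - c ^ 2) * Real.exp (-u ^ 2 / 2)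
      = σ ^ 2 * (u ^ 2 * Real.exp (-u ^ 2 / 2)) - c ^ 2 * Real.exp (-u ^ 2 / 2) := by
    intro u; ring
  have i1 : IntervalIntegrable (fun u : ℝ => σ ^ 2 * (u ^ 2 * Real.exp (-u ^ 2 / 2))) volume (-b) b :=
    Continuous.intervalIntegrable (by fun_prop) _ _
  have i2 : IntervalIntegrable (fun u : ℝ => c ^ 2 * Real.exp (-u ^ 2 / 2)) volume (-b) b :=
    Continuous.intervalIntegrable (by fun_prop) _ _
  rw [intervalIntegral.integral_congr (fun u _ => e3 u), intervalIntegral.integral_sub i1 i2,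
    intervalIntegral.integral_const_mul, intervalIntegral.integral_const_mul, intB b, intA b]
  have harg : c / (Real.sqrt 2 * σ) = b / Real.sqrt 2 := by
    rw [hbdef, div_div, mul_comm]
  rw [harg, F]
  have hsp : (0:ℝ) < Real.sqrt (2 * π) := Real.sqrt_pos.mpr (by positivity)
  have hss : Real.sqrt (2 / π) * Real.sqrt (2 * π) = 2 := by
    rw [← Real.sqrt_mul (by positivity : (0:ℝ) ≤ 2 / π)]
    rw [show (2 / π) * (2 * π) = 4 by field_simp; ring]
    rw [show (4:ℝ) = 2 ^ 2 by norm_num, Real.sqrt_sq (by norm_num : (0:ℝ) ≤ 2)]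
  have h22 : Real.sqrt 2 * Real.sqrt 2 = 2 := Real.mul_self_sqrt (by norm_num)
  field_simp
  linear_combination (σ ^ 2 * c * σ⁻¹ * Real.exp (-(b ^ 2 / 2))) * hss
end

section
/- Let β < 1 and x > 0, and assume that either β ≥ 0 or x ≥ −2β. Then E_β(x) ≤ 2 e^{−x}/x. -/
open MeasureTheory Real

/-- The exponential integral `E_β(x) = ∫₁^∞ e^{−xt} t^{−β} dt`. -/
noncomputable def expInt (β x : ℝ) : ℝ := ∫ t in Set.Ioi (1:ℝ), Real.exp (-x * t) * t ^ (-β)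

lemma aux_integral_exp {a : ℝ} (ha : 0 < a) :
    (∫ t in Set.Ioi (1:ℝ), Real.exp (-(a * t))) = a⁻¹ * Real.exp (-a) := by
  have := integral_comp_mul_left_Ioi (fun u => Real.exp (-u)) 1 ha
  simp only [mul_one, smul_eq_mul] at this
  rw [this, integral_exp_neg_Ioi]

/-- For `β < 1` and `x > 0` with either `β ≥ 0` or `x ≥ −2β`, one has
`E_β(x) ≤ 2 e^{−x}/x`. -/
theorem expInt_exp_bound (β x : ℝ) (hβ : β < 1) (hx : 0 < x) (h : 0 ≤ β ∨ -2 * β ≤ x) :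
    expInt β x ≤ 2 * Real.exp (-x) / x := by
  set b : ℝ := min β 0 with hb
  have hb0 : b ≤ 0 := min_le_right _ _
  have hbβ : b ≤ β := min_le_left _ _
  have h2b : -2 * b ≤ x := by
    rcases h with h | h
    · have : b = 0 := min_eq_right h
      rw [this]; linarith
    · rcases le_or_gt 0 β with hβ0 | hβ0
      · have : b = 0 := min_eq_right hβ0
        rw [this]; linarith
      · have : b = β := min_eq_left hβ0.le
        rw [this]; exact h
  have hxb : 0 < x + b := by nlinarith
  have hbound : ∀ t ∈ Set.Ioi (1:ℝ),
      Real.exp (-x * t) * t ^ (-β) ≤ Real.exp b * Real.exp (-((x + b) * t)) := by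
    intro t ht
    have ht1 : (1:ℝ) ≤ t := le_of_lt ht
    have h1 : t ^ (-β) ≤ t ^ (-b) :=
      Real.rpow_le_rpow_of_exponent_le ht1 (by linarith)
    have h2 : t ^ (-b) ≤ Real.exp (-b * (t - 1)) := by
      rw [Real.rpow_def_of_pos (by linarith)]
      apply Real.exp_le_exp.mpr
      have hlog : Real.log t ≤ t - 1 := Real.log_le_sub_one_of_pos (by linarith)
      nlinarith [hlog, hb0]
    calc Real.exp (-x * t) * t ^ (-β)
        ≤ Real.exp (-x * t) * Real.exp (-b * (t - 1)) :=
          mul_le_mul_of_nonneg_left (h1.trans h2) (Real.exp_pos _).le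
      _ = Real.exp b * Real.exp (-((x + b) * t)) := by
          rw [← Real.exp_add, ← Real.exp_add]; ring_nf
  have hg' : IntegrableOn (fun t => Real.exp (-((x + b) * t))) (Set.Ioi (1:ℝ)) := by
    have := exp_neg_integrableOn_Ioi (1:ℝ) hxb
    simp only [neg_mul] at this
    exact this
  have hg : IntegrableOn (fun t => Real.exp b * Real.exp (-((x + b) * t))) (Set.Ioi (1:ℝ)) :=
    hg'.const_mul _
  have hmeas : Measurable (fun t : ℝ => Real.exp (-x * t) * t ^ (-β)) := by
    fun_prop
  have hmono : expInt β x ≤ ∫ t in Set.Ioi (1:ℝ), Real.exp b * Real.exp (-((x + b) * t)) := by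
    unfold expInt
    have hf : IntegrableOn (fun t => Real.exp (-x * t) * t ^ (-β)) (Set.Ioi (1:ℝ)) := by
      apply hg.mono' hmeas.aestronglyMeasurable
      filter_upwards [ae_restrict_mem measurableSet_Ioi] with t ht
      rw [Real.norm_eq_abs, abs_of_nonneg (mul_nonneg (Real.exp_pos _).le
        (Real.rpow_nonneg (by linarith [Set.mem_Ioi.mp ht]) _))]
      exact hbound t ht
    exact setIntegral_mono_on hf hg measurableSet_Ioi hbound
  have hval : (∫ t in Set.Ioi (1:ℝ), Real.exp b * Real.exp (-((x + b) * t)))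
      = Real.exp (-x) / (x + b) := by
    rw [integral_const_mul, aux_integral_exp hxb, ← mul_assoc, mul_comm (Real.exp b),
      mul_assoc, ← Real.exp_add, div_eq_mul_inv, mul_comm]
    ring_nf
  have hfin : Real.exp (-x) / (x + b) ≤ 2 * Real.exp (-x) / x := by
    rw [div_le_div_iff₀ hxb hx]
    nlinarith [Real.exp_pos (-x)]
  linarith [hmono, hval ▸ hmono]
end

section
/- Let a > 0, b₁ > 0, b₂ > 0, R₀ ∈ ℝ. Suppose R : [0,1] → ℝ is differentiable with R(0) = R₀ and R'(t) = −a √(1−t) R(t) + b₁ (1−t) + b₂ for all t ∈ [0,1]. Then for every t ∈ [0,1): R(t) = e^{−2a(1−(1−t)^{3/2})/3} [ R₀ − (2/3) b₁ e^{2a/3} ( E_{−1/3}(2a/3) − (1−t)² E_{−1/3}(2a(1−t)^{3/2}/3) ) − (2/3) b₂ e^{2a/3} ( E_{1/3}(2a/3) − (1−t) E_{1/3}(2a(1−t)^{3/2}/3) ) ]. -/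
open MeasureTheory Real

lemma image_aux {x : ℝ} (hx : 0 < x) :
    (fun t : ℝ => x * t ^ ((2:ℝ)/3)) '' Set.Ioi 1 = Set.Ioi x := by
  ext y
  constructor
  · rintro ⟨t, ht, rfl⟩
    have ht1 : (1:ℝ) < t := ht
    have : (1:ℝ) < t ^ ((2:ℝ)/3) :=
      Real.one_lt_rpow_iff_of_pos (by linarith) |>.mpr (Or.inl ⟨ht1, by norm_num⟩)
    have := mul_lt_mul_of_pos_left this hx
    simpa using this
  · intro hy
    have hy' : x < y := hy
    have hyx : 1 < y / x := (one_lt_div hx).mpr hy'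
    refine ⟨(y / x) ^ ((3:ℝ)/2), ?_, ?_⟩
    · exact Real.one_lt_rpow_iff_of_pos (by linarith) |>.mpr (Or.inl ⟨hyx, by norm_num⟩)
    · have h0 : (0:ℝ) ≤ y / x := by positivity
      show x * ((y / x) ^ ((3:ℝ)/2)) ^ ((2:ℝ)/3) = y
      rw [← Real.rpow_mul h0]
      norm_num
      field_simp

lemma expInt_tail {c x : ℝ} (hx : 0 < x) (q : ℝ) :
    ∫ s in Set.Ioi x, Real.exp (-c * s ^ ((3:ℝ)/2)) * s ^ q
      = (2/3) * x ^ (q+1) * expInt ((1-2*q)/3) (c * x ^ ((3:ℝ)/2)) := by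
  have hderiv : ∀ t ∈ Set.Ioi (1:ℝ),
      HasDerivWithinAt (fun t : ℝ => x * t ^ ((2:ℝ)/3))
        (x * ((2:ℝ)/3 * t ^ ((2:ℝ)/3 - 1))) (Set.Ioi 1) t := by
    intro t ht
    have ht0 : t ≠ 0 := by have : (1:ℝ) < t := ht; linarith
    exact ((Real.hasDerivAt_rpow_const (Or.inl ht0)).const_mul x).hasDerivWithinAt
  have hinj : Set.InjOn (fun t : ℝ => x * t ^ ((2:ℝ)/3)) (Set.Ioi 1) := by
    have hm : StrictMonoOn (fun t : ℝ => x * t ^ ((2:ℝ)/3)) (Set.Ioi 1) := by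
      intro s hs t ht hst
      have hs0 : (0:ℝ) ≤ s := le_trans zero_le_one (le_of_lt hs)
      exact mul_lt_mul_of_pos_left (Real.rpow_lt_rpow hs0 hst (by norm_num)) hx
    exact hm.injOn
  have := MeasureTheory.integral_image_eq_integral_abs_deriv_smul measurableSet_Ioi
    hderiv hinj (fun s => Real.exp (-c * s ^ ((3:ℝ)/2)) * s ^ q)
  rw [image_aux hx] at this
  rw [this]
  rw [expInt, ← MeasureTheory.integral_const_mul]
  refine MeasureTheory.setIntegral_congr_fun measurableSet_Ioi (fun t ht => ?_)
  have ht1 : (1:ℝ) < t := ht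
  have ht0 : (0:ℝ) < t := by linarith
  have hab : |x * ((2:ℝ)/3 * t ^ ((2:ℝ)/3 - 1))| = x * ((2:ℝ)/3 * t ^ ((2:ℝ)/3 - 1)) := by
    refine abs_of_pos ?_
    have : (0:ℝ) < t ^ ((2:ℝ)/3 - 1) := Real.rpow_pos_of_pos ht0 _
    positivity
  rw [smul_eq_mul, hab]
  have h1 : (x * t ^ ((2:ℝ)/3)) ^ ((3:ℝ)/2) = x ^ ((3:ℝ)/2) * t := by
    rw [Real.mul_rpow (le_of_lt hx) (Real.rpow_nonneg (le_of_lt ht0) _),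
      ← Real.rpow_mul (le_of_lt ht0)]
    norm_num
  have h2 : (x * t ^ ((2:ℝ)/3)) ^ q = x ^ q * t ^ ((2:ℝ)/3 * q) := by
    rw [Real.mul_rpow (le_of_lt hx) (Real.rpow_nonneg (le_of_lt ht0) _),
      ← Real.rpow_mul (le_of_lt ht0)]
  simp only [h1, h2]
  have h3 : -c * (x ^ ((3:ℝ)/2) * t) = -(c * x ^ ((3:ℝ)/2)) * t := by ring
  rw [h3]
  have h4 : x ^ (q + 1) = x ^ q * x := by rw [Real.rpow_add hx, Real.rpow_one]
  have h5 : t ^ ((2:ℝ)/3 - 1) * t ^ ((2:ℝ)/3 * q) = t ^ (-((1 - 2*q)/3)) := by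
    rw [← Real.rpow_add ht0]; congr 1; ring
  rw [h4]
  calc x * ((2:ℝ)/3 * t ^ ((2:ℝ)/3 - 1)) *
      (Real.exp (-(c * x ^ ((3:ℝ)/2)) * t) * (x ^ q * t ^ ((2:ℝ)/3 * q)))
      = 2/3 * (x ^ q * x) * (Real.exp (-(c * x ^ ((3:ℝ)/2)) * t) *
        (t ^ ((2:ℝ)/3 - 1) * t ^ ((2:ℝ)/3 * q))) := by ring
    _ = _ := by rw [h5]

lemma expInt_tail₁ {c x : ℝ} (hx : 0 < x) :
    ∫ s in Set.Ioi x, Real.exp (-c * s ^ ((3:ℝ)/2))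
      = (2/3) * x * expInt (1/3) (c * x ^ ((3:ℝ)/2)) := by
  have h := expInt_tail (c := c) hx 0
  rw [show ((1:ℝ)-2*0)/3 = 1/3 by norm_num, zero_add, Real.rpow_one] at h
  rw [← h]
  refine MeasureTheory.setIntegral_congr_fun measurableSet_Ioi (fun s hs => ?_)
  have : (0:ℝ) < s := lt_trans hx hs
  rw [Real.rpow_zero, mul_one]

lemma expInt_tail₂ {c x : ℝ} (hx : 0 < x) :
    ∫ s in Set.Ioi x, Real.exp (-c * s ^ ((3:ℝ)/2)) * s
      = (2/3) * x ^ 2 * expInt (-1/3) (c * x ^ ((3:ℝ)/2)) := by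
  have h := expInt_tail (c := c) hx 1
  rw [show ((1:ℝ)-2*1)/3 = -1/3 by norm_num,
    show ((1:ℝ)+1) = ((2:ℕ):ℝ) by norm_num, Real.rpow_natCast] at h
  rw [← h]
  refine MeasureTheory.setIntegral_congr_fun measurableSet_Ioi (fun s hs => ?_)
  rw [Real.rpow_one]

lemma integrable_tail {c : ℝ} (hc : 0 < c) {q : ℝ} (hq : -1 < q) :
    IntegrableOn (fun s : ℝ => Real.exp (-c * s ^ ((3:ℝ)/2)) * s ^ q) (Set.Ioi 0) := by
  have h := integrableOn_rpow_mul_exp_neg_mul_rpow hq (by norm_num : (0:ℝ) < 3/2) hc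
  refine h.congr_fun (fun s hs => ?_) measurableSet_Ioi
  rw [mul_comm]

lemma integrable_tail₁ {c x : ℝ} (hc : 0 < c) (hx : 0 < x) :
    IntegrableOn (fun s : ℝ => Real.exp (-c * s ^ ((3:ℝ)/2))) (Set.Ioi x) := by
  have h := (integrable_tail hc (by norm_num : (-1:ℝ) < 0)).mono_set
    (Set.Ioi_subset_Ioi (le_of_lt hx))
  refine h.congr_fun (fun s hs => ?_) measurableSet_Ioi
  have : (0:ℝ) < s := lt_trans hx hs
  dsimp only
  rw [Real.rpow_zero, mul_one]

lemma integrable_tail₂ {c x : ℝ} (hc : 0 < c) (hx : 0 < x) :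
    IntegrableOn (fun s : ℝ => Real.exp (-c * s ^ ((3:ℝ)/2)) * s) (Set.Ioi x) := by
  have h := (integrable_tail hc (by norm_num : (-1:ℝ) < 1)).mono_set
    (Set.Ioi_subset_Ioi (le_of_lt hx))
  refine h.congr_fun (fun s hs => ?_) measurableSet_Ioi
  dsimp only
  rw [Real.rpow_one]

lemma split_tail {x : ℝ} (hx1 : x ≤ 1) {g : ℝ → ℝ} (hg : IntegrableOn g (Set.Ioi x)) :
    ∫ s in Set.Ioc x 1, g s = (∫ s in Set.Ioi x, g s) - ∫ s in Set.Ioi 1, g s := by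
  have hdisj : Disjoint (Set.Ioc x 1) (Set.Ioi (1:ℝ)) := by
    rw [Set.disjoint_left]; rintro y ⟨_, hy1⟩ hy1'
    exact absurd hy1' (not_lt.mpr hy1)
  have hu : Set.Ioc x 1 ∪ Set.Ioi 1 = Set.Ioi x := Set.Ioc_union_Ioi_eq_Ioi hx1
  have := MeasureTheory.setIntegral_union hdisj measurableSet_Ioi
    (hg.mono_set (by rw [← hu]; exact Set.subset_union_left))
    (hg.mono_set (by rw [← hu]; exact Set.subset_union_right))
  rw [hu] at this
  linarith

lemma cont_rpow32 : Continuous fun y : ℝ => y ^ ((3:ℝ)/2) := by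
  rw [continuous_iff_continuousAt]
  intro y
  exact Real.continuousAt_rpow_const y _ (Or.inr (by norm_num))

/-- Closed-form solution of the ODE `R'(t) = −a√(1−t) R(t) + b₁(1−t) + b₂` on `[0,1]`,
expressed with the exponential integrals `E_{−1/3}` and `E_{1/3}`. -/
theorem ode_sqrt_schedule_closed_form (a b₁ b₂ R₀ : ℝ) (ha : 0 < a) (hb₁ : 0 < b₁)
    (hb₂ : 0 < b₂) (R : ℝ → ℝ) (hR0 : R 0 = R₀)
    (hR : ∀ t ∈ Set.Icc (0:ℝ) 1,
      HasDerivAt R (-a * Real.sqrt (1 - t) * R t + b₁ * (1 - t) + b₂) t) :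
    ∀ t ∈ Set.Ico (0:ℝ) 1,
      R t = Real.exp (-(2 * a * (1 - (1 - t) ^ ((3:ℝ)/2)) / 3)) *
        (R₀
          - (2/3) * b₁ * Real.exp (2 * a / 3) *
            (expInt (-1/3) (2 * a / 3)
              - (1 - t) ^ 2 * expInt (-1/3) (2 * a * (1 - t) ^ ((3:ℝ)/2) / 3))
          - (2/3) * b₂ * Real.exp (2 * a / 3) *
            (expInt (1/3) (2 * a / 3)
              - (1 - t) * expInt (1/3) (2 * a * (1 - t) ^ ((3:ℝ)/2) / 3))) := by
  intro t ht
  obtain ⟨ht0, ht1⟩ := ht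
  have hx : (0:ℝ) < 1 - t := by linarith
  set c : ℝ := 2 * a / 3 with hc
  have hc0 : 0 < c := by positivity
  -- continuity of the forcing term
  have hcontF : Continuous fun s : ℝ =>
      Real.exp (2 * a * (1 - (1 - s) ^ ((3:ℝ)/2)) / 3) * (b₁ * (1 - s) + b₂) := by
    have h1 : Continuous fun s : ℝ => (1 - s) ^ ((3:ℝ)/2) :=
      cont_rpow32.comp (continuous_const.sub continuous_id)
    fun_prop
  -- derivative of the integrating-factor product
  have hderiv : ∀ s ∈ Set.uIcc (0:ℝ) t,
      HasDerivAt (fun u => Real.exp (2 * a * (1 - (1 - u) ^ ((3:ℝ)/2)) / 3) * R u)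
        (Real.exp (2 * a * (1 - (1 - s) ^ ((3:ℝ)/2)) / 3) * (b₁ * (1 - s) + b₂)) s := by
    intro s hs
    rw [Set.uIcc_of_le ht0] at hs
    have hs1 : s < 1 := lt_of_le_of_lt hs.2 ht1
    have h1s : (0:ℝ) < 1 - s := by linarith
    have hu : HasDerivAt (fun u : ℝ => 1 - u) (-1) s := (hasDerivAt_id s).const_sub 1
    have h32 : HasDerivAt (fun u : ℝ => (1 - u) ^ ((3:ℝ)/2))
        (((3:ℝ)/2 * (1 - s) ^ ((3:ℝ)/2 - 1)) * (-1)) s :=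
      (Real.hasDerivAt_rpow_const (Or.inl (ne_of_gt h1s))).comp s hu
    have hmu : HasDerivAt (fun u : ℝ => 2 * a * (1 - (1 - u) ^ ((3:ℝ)/2)) / 3)
        (2 * a * (-((3:ℝ)/2 * (1 - s) ^ ((3:ℝ)/2 - 1) * (-1))) / 3) s :=
      ((h32.const_sub 1).const_mul (2 * a)).div_const 3
    have hexp := hmu.exp
    have hRd := hR s ⟨hs.1, le_of_lt hs1⟩
    have := hexp.mul hRd
    refine this.congr_deriv ?_
    have hsq : Real.sqrt (1 - s) = (1 - s) ^ ((3:ℝ)/2 - 1) := by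
      rw [Real.sqrt_eq_rpow]; norm_num
    rw [hsq]
    ring
  have hint := hcontF.intervalIntegrable (μ := volume) (0:ℝ) t
  have hFTC := intervalIntegral.integral_eq_sub_of_hasDerivAt hderiv hint
  rw [hR0] at hFTC
  simp only [sub_zero, Real.one_rpow, sub_self, mul_zero, zero_mul, zero_div,
    Real.exp_zero, one_mul] at hFTC
  -- split the forcing integral
  have hrc32 : Continuous fun y : ℝ => y ^ ((3:ℝ)/2) := cont_rpow32
  have hcont1 : Continuous fun u : ℝ => Real.exp (-c * u ^ ((3:ℝ)/2)) := by fun_prop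
  have hcont2 : Continuous fun u : ℝ => Real.exp (-c * u ^ ((3:ℝ)/2)) * u := by fun_prop
  have hsplit : ∫ s in (0:ℝ)..t, Real.exp (2 * a * (1 - (1 - s) ^ ((3:ℝ)/2)) / 3) *
      (b₁ * (1 - s) + b₂)
      = b₁ * Real.exp c * (∫ u in (1-t)..1, Real.exp (-c * u ^ ((3:ℝ)/2)) * u)
        + b₂ * Real.exp c * ∫ u in (1-t)..1, Real.exp (-c * u ^ ((3:ℝ)/2)) := by
    have hpt : ∀ s : ℝ, Real.exp (2 * a * (1 - (1 - s) ^ ((3:ℝ)/2)) / 3) *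
        (b₁ * (1 - s) + b₂)
        = b₁ * Real.exp c * (Real.exp (-c * (1-s) ^ ((3:ℝ)/2)) * (1-s))
          + b₂ * Real.exp c * Real.exp (-c * (1-s) ^ ((3:ℝ)/2)) := by
      intro s
      rw [show 2 * a * (1 - (1 - s) ^ ((3:ℝ)/2)) / 3 = c + (-c * (1 - s) ^ ((3:ℝ)/2)) by
        rw [hc]; ring, Real.exp_add]
      ring
    rw [intervalIntegral.integral_congr (fun s _ => hpt s)]
    have hcomp : Continuous fun s : ℝ => (1 - s) ^ ((3:ℝ)/2) :=
      cont_rpow32.comp (continuous_const.sub continuous_id)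
    have hi2 : IntervalIntegrable
        (fun s : ℝ => b₁ * Real.exp c * (Real.exp (-c * (1-s) ^ ((3:ℝ)/2)) * (1-s)))
        volume 0 t := Continuous.intervalIntegrable (by fun_prop) 0 t
    have hi1 : IntervalIntegrable
        (fun s : ℝ => b₂ * Real.exp c * Real.exp (-c * (1-s) ^ ((3:ℝ)/2)))
        volume 0 t := Continuous.intervalIntegrable (by fun_prop) 0 t
    rw [intervalIntegral.integral_add hi2 hi1,
      intervalIntegral.integral_const_mul, intervalIntegral.integral_const_mul]
    rw [intervalIntegral.integral_comp_sub_left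
        (fun u : ℝ => Real.exp (-c * u ^ ((3:ℝ)/2)) * u) 1,
      intervalIntegral.integral_comp_sub_left
        (fun u : ℝ => Real.exp (-c * u ^ ((3:ℝ)/2))) 1,
      show (1:ℝ) - 0 = 1 by norm_num]
  -- evaluate the two integrals via expInt
  have hJ2 : (∫ u in (1-t)..1, Real.exp (-c * u ^ ((3:ℝ)/2)) * u)
      = (2/3) * (1-t)^2 * expInt (-1/3) (c * (1-t) ^ ((3:ℝ)/2)) - (2/3) * expInt (-1/3) c := by
    rw [intervalIntegral.integral_of_le (by linarith : 1 - t ≤ 1),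
      split_tail (by linarith) (integrable_tail₂ hc0 hx),
      expInt_tail₂ (c := c) hx, expInt_tail₂ (c := c) one_pos]
    norm_num [Real.one_rpow]
  have hJ1 : (∫ u in (1-t)..1, Real.exp (-c * u ^ ((3:ℝ)/2)))
      = (2/3) * (1-t) * expInt (1/3) (c * (1-t) ^ ((3:ℝ)/2)) - (2/3) * expInt (1/3) c := by
    rw [intervalIntegral.integral_of_le (by linarith : 1 - t ≤ 1),
      split_tail (by linarith) (integrable_tail₁ hc0 hx),
      expInt_tail₁ (c := c) hx, expInt_tail₁ (c := c) one_pos]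
    norm_num [Real.one_rpow]
  rw [hsplit, hJ2, hJ1] at hFTC
  -- conclude
  rw [show 2 * a * (1 - t) ^ ((3:ℝ)/2) / 3 = c * (1 - t) ^ ((3:ℝ)/2) by rw [hc]; ring]
  have hkey : Real.exp (2 * a * (1 - (1 - t) ^ ((3:ℝ)/2)) / 3) * R t
      = R₀
        - (2/3) * b₁ * Real.exp c *
          (expInt (-1/3) c - (1 - t) ^ 2 * expInt (-1/3) (c * (1 - t) ^ ((3:ℝ)/2)))
        - (2/3) * b₂ * Real.exp c *
          (expInt (1/3) c - (1 - t) * expInt (1/3) (c * (1 - t) ^ ((3:ℝ)/2))) := by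
    rw [eq_comm, sub_eq_iff_eq_add] at hFTC
    rw [hFTC]; ring
  rw [← hkey, ← mul_assoc, ← Real.exp_add]
  simp
end

section
/- Let α ≥ 1, a > 0, b₁ ≥ 0, b₂ ≥ 0, R₀ ≥ 0. Suppose R : [0,1] → ℝ is differentiable with R(0) = R₀ and R'(t) = −a (1−t)^α R(t) + b₁ (1−t)^{2α} + b₂ (1−t)^{2α−1} for all t ∈ [0,1]. Then R(1) ≤ R₀ e^{−a/(1+α)} + (1+α) b₁ a^{−(2α+1)/(1+α)} + (1+α) b₂ a^{−2α/(1+α)}. -/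
open MeasureTheory Real

private lemma cont_rpow_one_sub {p : ℝ} (hp : 1 ≤ p) :
    Continuous fun s : ℝ => (1 - s) ^ p := by
  have h : Continuous fun x : ℝ => x ^ p := by
    rw [continuous_iff_continuousAt]
    exact fun x => (Real.hasDerivAt_rpow_const (Or.inr hp)).continuousAt
  exact h.comp (continuous_const.sub continuous_id)

private lemma amgm_rpow {β u : ℝ} (hβ0 : 0 ≤ β) (hβ1 : β ≤ 1) (hu : 0 ≤ u) :
    u ^ β ≤ β * u + (1 - β) := by
  have h := Real.geom_mean_le_arith_mean2_weighted hβ0 (by linarith : (0:ℝ) ≤ 1 - β)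
    hu zero_le_one (by ring)
  simpa using h

private lemma hasDerivAt_one_sub_rpow {p : ℝ} (hp : 1 ≤ p) (s : ℝ) :
    HasDerivAt (fun s : ℝ => (1 - s) ^ p) (-(p * (1 - s) ^ (p - 1))) s := by
  have h2 : HasDerivAt (fun s : ℝ => 1 - s) (-1) s := (hasDerivAt_id s).const_sub 1
  have h3 := (Real.hasDerivAt_rpow_const (x := 1 - s) (p := p) (Or.inr hp)).comp s h2
  simpa [Function.comp_def] using h3

private lemma key_integral_bound {α c β b : ℝ} (hα : 1 ≤ α) (hc : 0 < c)
    (hβ0 : 0 ≤ β) (hβ1 : β ≤ 1) (hb : 0 ≤ b) :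
    ∫ s in (0:ℝ)..1, b * ((1 - s) ^ (α + (1 + α) * β) * Real.exp (-c * (1 - s) ^ (1 + α)))
      ≤ b * (c ^ (-β - 1) / (1 + α)) := by
  have h1α : (0:ℝ) < 1 + α := by linarith
  have h1α' : (1:ℝ) ≤ 1 + α := by linarith
  have hαβ : (1:ℝ) ≤ α + (1 + α) * β := by nlinarith
  set G : ℝ → ℝ := fun s =>
    b * (c ^ (-β) / (1 + α) * ((β * (1 - s) ^ (1 + α) + 1 / c)
      * Real.exp (-c * (1 - s) ^ (1 + α)))) with hG
  set D : ℝ → ℝ := fun s =>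
    b * (c ^ (-β) * (c * β * (1 - s) ^ (1 + α) + (1 - β)) *
      ((1 - s) ^ α * Real.exp (-c * (1 - s) ^ (1 + α)))) with hD
  have hu : ∀ s : ℝ, HasDerivAt (fun s : ℝ => (1 - s) ^ (1 + α))
      (-((1 + α) * (1 - s) ^ α)) s := by
    intro s
    have := hasDerivAt_one_sub_rpow h1α' s
    simpa [show (1:ℝ) + α - 1 = α from by ring] using this
  have hexp : ∀ s : ℝ, HasDerivAt (fun s : ℝ => Real.exp (-c * (1 - s) ^ (1 + α)))
      (Real.exp (-c * (1 - s) ^ (1 + α)) * (-c * -((1 + α) * (1 - s) ^ α))) s := by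
    intro s
    exact ((hu s).const_mul (-c)).exp
  have hGderiv : ∀ s : ℝ, HasDerivAt G (D s) s := by
    intro s
    have h4 : HasDerivAt (fun s : ℝ => β * (1 - s) ^ (1 + α) + 1 / c)
        (β * -((1 + α) * (1 - s) ^ α)) s := ((hu s).const_mul β).add_const (1 / c)
    have h5 := (h4.mul (hexp s)).const_mul (b * (c ^ (-β) / (1 + α)))
    have h6 : HasDerivAt (fun s => b * (c ^ (-β) / (1 + α) * ((β * (1 - s) ^ (1 + α) + 1 / c)
        * Real.exp (-c * (1 - s) ^ (1 + α)))))
        (b * (c ^ (-β) / (1 + α)) * (β * -((1 + α) * (1 - s) ^ α)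
          * Real.exp (-c * (1 - s) ^ (1 + α))
          + (β * (1 - s) ^ (1 + α) + 1 / c)
            * (Real.exp (-c * (1 - s) ^ (1 + α)) * (-c * -((1 + α) * (1 - s) ^ α))))) s := by
      convert h5 using 2
      · rfl
      · rfl
      · simp only [Pi.mul_apply]
        ring
    rw [hG]
    convert h6 using 1
    rw [hD]
    have hcne : c ≠ 0 := hc.ne'
    field_simp
    ring
  have contE : Continuous fun s : ℝ => Real.exp (-c * (1 - s) ^ (1 + α)) :=
    Real.continuous_exp.comp (continuous_const.mul (cont_rpow_one_sub h1α'))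
  have contF : Continuous fun s : ℝ => b * ((1 - s) ^ (α + (1 + α) * β) *
      Real.exp (-c * (1 - s) ^ (1 + α))) :=
    continuous_const.mul ((cont_rpow_one_sub hαβ).mul contE)
  have contD : Continuous D := by
    apply continuous_const.mul
    apply Continuous.mul
    · exact continuous_const.mul ((continuous_const.mul
        (cont_rpow_one_sub h1α')).add continuous_const)
    · exact (cont_rpow_one_sub hα).mul contE
  have hpt : ∀ s ∈ Set.Icc (0:ℝ) 1,
      b * ((1 - s) ^ (α + (1 + α) * β) * Real.exp (-c * (1 - s) ^ (1 + α))) ≤ D s := by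
    intro s hs
    have hw : (0:ℝ) ≤ 1 - s := by linarith [hs.2]
    have hune : (0:ℝ) ≤ (1 - s) ^ (1 + α) := Real.rpow_nonneg hw _
    have h1 : (1 - s) ^ (α + (1 + α) * β)
        = (1 - s) ^ α * ((1 - s) ^ (1 + α)) ^ β := by
      rw [← Real.rpow_mul hw, ← Real.rpow_add' hw (by nlinarith : α + (1 + α) * β ≠ 0)]
    have h2 : ((1 - s) ^ (1 + α)) ^ β
        ≤ c ^ (-β) * (c * β * (1 - s) ^ (1 + α) + (1 - β)) := by
      have e1 : ((1 - s) ^ (1 + α)) ^ β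
          = c ^ (-β) * (c * (1 - s) ^ (1 + α)) ^ β := by
        rw [Real.mul_rpow hc.le hune, Real.rpow_neg hc.le]
        rw [← mul_assoc, inv_mul_cancel₀ (Real.rpow_pos_of_pos hc β).ne', one_mul]
      rw [e1]
      have e2 : (c * (1 - s) ^ (1 + α)) ^ β ≤ β * (c * (1 - s) ^ (1 + α)) + (1 - β) :=
        amgm_rpow hβ0 hβ1 (by positivity)
      have hcb : (0:ℝ) ≤ c ^ (-β) := (Real.rpow_pos_of_pos hc _).le
      nlinarith [mul_le_mul_of_nonneg_left e2 hcb]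
    have hmain : (1 - s) ^ (α + (1 + α) * β) * Real.exp (-c * (1 - s) ^ (1 + α))
        ≤ c ^ (-β) * (c * β * (1 - s) ^ (1 + α) + (1 - β)) *
          ((1 - s) ^ α * Real.exp (-c * (1 - s) ^ (1 + α))) := by
      calc (1 - s) ^ (α + (1 + α) * β) * Real.exp (-c * (1 - s) ^ (1 + α))
          = ((1 - s) ^ (1 + α)) ^ β * ((1 - s) ^ α * Real.exp (-c * (1 - s) ^ (1 + α))) := by
            rw [h1]; ring
        _ ≤ (c ^ (-β) * (c * β * (1 - s) ^ (1 + α) + (1 - β))) *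
              ((1 - s) ^ α * Real.exp (-c * (1 - s) ^ (1 + α))) := by
            apply mul_le_mul_of_nonneg_right h2
            exact mul_nonneg (Real.rpow_nonneg hw _) (Real.exp_nonneg _)
    rw [hD]
    exact mul_le_mul_of_nonneg_left hmain hb
  have hint : ∫ s in (0:ℝ)..1, D s = G 1 - G 0 :=
    intervalIntegral.integral_eq_sub_of_hasDerivAt
      (fun s _ => hGderiv s) (contD.intervalIntegrable 0 1)
  have hmono := intervalIntegral.integral_mono_on (μ := volume) (by norm_num : (0:ℝ) ≤ 1)
    (contF.intervalIntegrable 0 1) (contD.intervalIntegrable 0 1) hpt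
  have hG1 : G 1 = b * (c ^ (-β) / (1 + α) * (1 / c)) := by
    simp [hG, Real.zero_rpow (show (1:ℝ) + α ≠ 0 from h1α.ne')]
  have hG0 : 0 ≤ G 0 := by
    rw [hG]
    apply mul_nonneg hb
    apply mul_nonneg (by positivity)
    apply mul_nonneg _ (Real.exp_nonneg _)
    rw [show (1:ℝ) - 0 = 1 from by norm_num, Real.one_rpow]
    have h1c : (0:ℝ) ≤ 1 / c := by positivity
    linarith
  have hfin : c ^ (-β) / (1 + α) * (1 / c) = c ^ (-β - 1) / (1 + α) := by
    have h7 : c ^ (-β - 1) = c ^ (-β) * c ^ (-1 : ℝ) := by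
      rw [← Real.rpow_add hc]; ring_nf
    rw [h7, Real.rpow_neg_one]
    field_simp
  calc ∫ s in (0:ℝ)..1, b * ((1 - s) ^ (α + (1 + α) * β)
        * Real.exp (-c * (1 - s) ^ (1 + α)))
      ≤ ∫ s in (0:ℝ)..1, D s := hmono
    _ = G 1 - G 0 := hint
    _ ≤ G 1 := by linarith
    _ = b * (c ^ (-β - 1) / (1 + α)) := by rw [hG1, hfin]

private lemma coef_bound {a α β : ℝ} (hα : 1 ≤ α) (ha : 0 < a) (hβ1 : β ≤ 1) :
    (a / (1 + α)) ^ (-β - 1) / (1 + α) ≤ (1 + α) * a ^ (-β - 1) := by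
  have h1α : (0:ℝ) < 1 + α := by linarith
  have pa : (0:ℝ) < a ^ (-β - 1) := Real.rpow_pos_of_pos ha _
  have pb : (0:ℝ) < (1 + α) ^ (-β - 1) := Real.rpow_pos_of_pos h1α _
  rw [Real.div_rpow ha.le h1α.le]
  have e1 : (1 + α) ^ (-β - 1) * ((1 + α) * (1 + α)) = (1 + α) ^ (1 - β) := by
    nth_rewrite 2 [show (1:ℝ) + α = (1 + α) ^ (1:ℝ) from (Real.rpow_one _).symm]
    nth_rewrite 3 [show (1:ℝ) + α = (1 + α) ^ (1:ℝ) from (Real.rpow_one _).symm]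
    rw [← Real.rpow_add h1α, ← Real.rpow_add h1α]
    ring_nf
  have h3 : (1:ℝ) ≤ (1 + α) ^ (1 - β) := by
    calc (1:ℝ) = (1 + α) ^ (0:ℝ) := by simp
      _ ≤ (1 + α) ^ (1 - β) :=
        Real.rpow_le_rpow_of_exponent_le (by linarith) (by linarith)
  rw [div_div, div_le_iff₀ (by positivity)]
  have h4 : a ^ (-β - 1) * 1 ≤ a ^ (-β - 1) * ((1 + α) ^ (1 - β)) :=
    mul_le_mul_of_nonneg_left h3 pa.le
  calc a ^ (-β - 1) = a ^ (-β - 1) * 1 := (mul_one _).symm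
    _ ≤ a ^ (-β - 1) * ((1 + α) ^ (1 - β)) := h4
    _ = a ^ (-β - 1) * ((1 + α) ^ (-β - 1) * ((1 + α) * (1 + α))) := by rw [e1]
    _ = (1 + α) * a ^ (-β - 1) * ((1 + α) ^ (-β - 1) * (1 + α)) := by ring

/-- Final-risk bound for the ODE arising from the polynomial learning rate schedule
`(1−t)^α` with `α ≥ 1`:
if `R'(t) = −a(1−t)^α R(t) + b₁(1−t)^{2α} + b₂(1−t)^{2α−1}` on `[0,1]` then
`R(1) ≤ R₀ e^{−a/(1+α)} + (1+α) b₁ a^{−(2α+1)/(1+α)} + (1+α) b₂ a^{−2α/(1+α)}`. -/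
theorem ode_poly_schedule_final_bound (α a b₁ b₂ R₀ : ℝ) (hα : 1 ≤ α) (ha : 0 < a)
    (hb₁ : 0 ≤ b₁) (hb₂ : 0 ≤ b₂) (hR₀ : 0 ≤ R₀) (R : ℝ → ℝ) (hR0 : R 0 = R₀)
    (hR : ∀ t ∈ Set.Icc (0:ℝ) 1,
      HasDerivAt R (-a * (1 - t) ^ α * R t + b₁ * (1 - t) ^ (2 * α)
        + b₂ * (1 - t) ^ (2 * α - 1)) t) :
    R 1 ≤ R₀ * Real.exp (-a / (1 + α)) + (1 + α) * b₁ * a ^ (-(2 * α + 1) / (1 + α))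
      + (1 + α) * b₂ * a ^ (-(2 * α) / (1 + α)) := by
  have h1α : (0:ℝ) < 1 + α := by linarith
  have h1α' : (1:ℝ) ≤ 1 + α := by linarith
  set c : ℝ := a / (1 + α) with hc_def
  have hc : 0 < c := div_pos ha h1α
  have hca : c * (1 + α) = a := div_mul_cancel₀ a h1α.ne'
  set E : ℝ → ℝ := fun t => Real.exp (-c * (1 - t) ^ (1 + α)) with hE_def
  have hu : ∀ t : ℝ, HasDerivAt (fun t : ℝ => (1 - t) ^ (1 + α))
      (-((1 + α) * (1 - t) ^ α)) t := by
    intro t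
    have := hasDerivAt_one_sub_rpow h1α' t
    simpa [show (1:ℝ) + α - 1 = α from by ring] using this
  have hE : ∀ t : ℝ, HasDerivAt E (a * (1 - t) ^ α * E t) t := by
    intro t
    have h := ((hu t).const_mul (-c)).exp
    convert h using 1
    rw [hE_def]
    have h9 : -c * -((1 + α) * (1 - t) ^ α) = a * (1 - t) ^ α := by
      rw [← hca]; ring
    rw [h9]; ring
  set D : ℝ → ℝ := fun t =>
    E t * (b₁ * (1 - t) ^ (2 * α) + b₂ * (1 - t) ^ (2 * α - 1)) with hD_def
  have hprod : ∀ t ∈ Set.uIcc (0:ℝ) 1, HasDerivAt (fun t => R t * E t) (D t) t := by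
    intro t ht
    rw [Set.uIcc_of_le (by norm_num : (0:ℝ) ≤ 1)] at ht
    have h := (hR t ht).mul (hE t)
    refine h.congr_deriv ?_
    rw [hD_def]
    ring
  have contE : Continuous E := by
    rw [hE_def]
    exact Real.continuous_exp.comp (continuous_const.mul (cont_rpow_one_sub h1α'))
  have cont1 : Continuous fun t : ℝ => b₁ * ((1 - t) ^ (2 * α) * E t) :=
    continuous_const.mul ((cont_rpow_one_sub (p := 2 * α) (by linarith)).mul contE)
  have cont2 : Continuous fun t : ℝ => b₂ * ((1 - t) ^ (2 * α - 1) * E t) :=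
    continuous_const.mul ((cont_rpow_one_sub (p := 2 * α - 1) (by linarith)).mul contE)
  have contD : Continuous D := by
    rw [hD_def]
    exact contE.mul ((continuous_const.mul
        (cont_rpow_one_sub (p := 2 * α) (by linarith))).add
      (continuous_const.mul (cont_rpow_one_sub (p := 2 * α - 1) (by linarith))))
  have hFTC : ∫ t in (0:ℝ)..1, D t = R 1 * E 1 - R 0 * E 0 :=
    intervalIntegral.integral_eq_sub_of_hasDerivAt hprod (contD.intervalIntegrable 0 1)
  have hE1 : E 1 = 1 := by
    rw [hE_def]
    simp [Real.zero_rpow h1α.ne']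
  have hE0 : E 0 = Real.exp (-a / (1 + α)) := by
    rw [hE_def, hc_def]
    norm_num [Real.one_rpow, neg_div]
  -- split the integral
  have hsplit : ∫ t in (0:ℝ)..1, D t
      = (∫ t in (0:ℝ)..1, b₁ * ((1 - t) ^ (2 * α) * E t))
      + ∫ t in (0:ℝ)..1, b₂ * ((1 - t) ^ (2 * α - 1) * E t) := by
    rw [← intervalIntegral.integral_add (cont1.intervalIntegrable 0 1)
      (cont2.intervalIntegrable 0 1)]
    apply intervalIntegral.integral_congr
    intro t _
    simp only [hD_def]
    ring
  -- bound the two integrals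
  have hβ1a : (0:ℝ) ≤ α / (1 + α) := by positivity
  have hβ1b : α / (1 + α) ≤ 1 := by rw [div_le_one h1α]; linarith
  have hβ2a : (0:ℝ) ≤ (α - 1) / (1 + α) := div_nonneg (by linarith) h1α.le
  have hβ2b : (α - 1) / (1 + α) ≤ 1 := by rw [div_le_one h1α]; linarith
  have hexp1 : α + (1 + α) * (α / (1 + α)) = 2 * α := by field_simp; ring
  have hexp2 : α + (1 + α) * ((α - 1) / (1 + α)) = 2 * α - 1 := by field_simp; ring
  have hI1 : ∫ t in (0:ℝ)..1, b₁ * ((1 - t) ^ (2 * α) * E t)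
      ≤ b₁ * (c ^ (-(α / (1 + α)) - 1) / (1 + α)) := by
    have h := key_integral_bound hα hc hβ1a hβ1b hb₁
    rw [hexp1] at h
    simpa [hE_def] using h
  have hI2 : ∫ t in (0:ℝ)..1, b₂ * ((1 - t) ^ (2 * α - 1) * E t)
      ≤ b₂ * (c ^ (-((α - 1) / (1 + α)) - 1) / (1 + α)) := by
    have h := key_integral_bound hα hc hβ2a hβ2b hb₂
    rw [hexp2] at h
    simpa [hE_def] using h
  have hcoef1 : c ^ (-(α / (1 + α)) - 1) / (1 + α)
      ≤ (1 + α) * a ^ (-(2 * α + 1) / (1 + α)) := by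
    have h := coef_bound hα ha hβ1b
    have he : -(α / (1 + α)) - 1 = -(2 * α + 1) / (1 + α) := by field_simp; ring
    rw [hc_def, ← he]
    exact h
  have hcoef2 : c ^ (-((α - 1) / (1 + α)) - 1) / (1 + α)
      ≤ (1 + α) * a ^ (-(2 * α) / (1 + α)) := by
    have h := coef_bound hα ha hβ2b
    have he : -((α - 1) / (1 + α)) - 1 = -(2 * α) / (1 + α) := by field_simp; ring
    rw [hc_def, ← he]
    exact h
  -- assemble
  have hR1 : R 1 = R₀ * Real.exp (-a / (1 + α)) + ∫ t in (0:ℝ)..1, D t := by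
    have h := hFTC
    rw [hE1, hE0, hR0, mul_one] at h
    linarith
  have hA1 : ∫ t in (0:ℝ)..1, b₁ * ((1 - t) ^ (2 * α) * E t)
      ≤ b₁ * ((1 + α) * a ^ (-(2 * α + 1) / (1 + α))) :=
    hI1.trans (mul_le_mul_of_nonneg_left hcoef1 hb₁)
  have hA2 : ∫ t in (0:ℝ)..1, b₂ * ((1 - t) ^ (2 * α - 1) * E t)
      ≤ b₂ * ((1 + α) * a ^ (-(2 * α) / (1 + α))) :=
    hI2.trans (mul_le_mul_of_nonneg_left hcoef2 hb₂)
  calc R 1 = R₀ * Real.exp (-a / (1 + α))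
        + ((∫ t in (0:ℝ)..1, b₁ * ((1 - t) ^ (2 * α) * E t))
        + ∫ t in (0:ℝ)..1, b₂ * ((1 - t) ^ (2 * α - 1) * E t)) := by rw [hR1, hsplit]
    _ ≤ R₀ * Real.exp (-a / (1 + α))
        + (b₁ * ((1 + α) * a ^ (-(2 * α + 1) / (1 + α)))
        + (b₂ * ((1 + α) * a ^ (-(2 * α) / (1 + α))))) := by
          exact add_le_add_right (add_le_add hA1 hA2) _
    _ = R₀ * Real.exp (-a / (1 + α)) + (1 + α) * b₁ * a ^ (-(2 * α + 1) / (1 + α))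
        + (1 + α) * b₂ * a ^ (-(2 * α) / (1 + α)) := by ring
end

section
/- Let α > 0, τ > 0, a > 0, b₁ ≥ 0, b₂ ≥ 0 with a·α > 2, and let η(t) := α/(t+τ). Suppose R : [0,1] → ℝ is differentiable with R(0) = R₀ ≥ 0 and R'(t) = −a η(t) R(t) + b₁ η(t)² − b₂ (η²)'(t) for all t ∈ [0,1]. Then: (i) 0 ≤ R(t) ≤ R₀ + b₁ α²/(τ (aα − 1)) + 2 b₂ α²/(τ² (aα − 2)) for all t ∈ [0,1]; and (ii) R(1) ≤ (τ/(1+τ))^{aα} R₀ + b₁ α²/((1+τ)(aα − 1)) + 2 b₂ α²/((1+τ)²(aα − 2)). -/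
open MeasureTheory Real

/-- Bounds for the ODE arising from the harmonic learning rate schedule
`η(t) = α/(t+τ)`: if `R'(t) = −a η(t) R(t) + b₁ η(t)² − b₂ (η²)'(t)` on `[0,1]` with
`aα > 2`, then `R` stays in the stated band, and `R(1)` satisfies the stated bound. -/
theorem ode_harmonic_schedule_bounds (α τ a b₁ b₂ R₀ : ℝ) (hα : 0 < α) (hτ : 0 < τ)
    (ha : 0 < a) (hb₁ : 0 ≤ b₁) (hb₂ : 0 ≤ b₂) (hR₀ : 0 ≤ R₀) (haα : 2 < a * α)
    (R : ℝ → ℝ) (hR0 : R 0 = R₀)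
    (hR : ∀ t ∈ Set.Icc (0:ℝ) 1,
      HasDerivAt R (-a * (α / (t + τ)) * R t + b₁ * (α / (t + τ)) ^ 2
        - b₂ * deriv (fun s : ℝ => (α / (s + τ)) ^ 2) t) t) :
    (∀ t ∈ Set.Icc (0:ℝ) 1,
      0 ≤ R t ∧
      R t ≤ R₀ + b₁ * α ^ 2 / (τ * (a * α - 1)) + 2 * b₂ * α ^ 2 / (τ ^ 2 * (a * α - 2))) ∧
    R 1 ≤ (τ / (1 + τ)) ^ (a * α) * R₀ + b₁ * α ^ 2 / ((1 + τ) * (a * α - 1))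
      + 2 * b₂ * α ^ 2 / ((1 + τ) ^ 2 * (a * α - 2)) := by
  have hc2 : (2:ℝ) < a * α := haα
  have hc1 : (1:ℝ) < a * α := by linarith
  set c := a * α with hcdef
  clear_value c
  have hc1' : c - 1 ≠ 0 := sub_ne_zero.mpr (ne_of_gt hc1)
  have hc2' : c - 2 ≠ 0 := sub_ne_zero.mpr (ne_of_gt hc2)
  set d₁ : ℝ := b₁ * α ^ 2 / (c - 1) with hd₁
  set d₂ : ℝ := 2 * b₂ * α ^ 2 / (c - 2) with hd₂
  clear_value d₁ d₂
  have hd₁nn : 0 ≤ d₁ := by rw [hd₁]; exact div_nonneg (by positivity) (by linarith)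
  have hd₂nn : 0 ≤ d₂ := by rw [hd₂]; exact div_nonneg (by positivity) (by linarith)
  set φ : ℝ → ℝ := fun t => (t + τ) ^ c * R t - d₁ * (t + τ) ^ (c - 1)
      - d₂ * (t + τ) ^ (c - 2) with hφ
  clear_value φ
  have hupos : ∀ t ∈ Set.Icc (0:ℝ) 1, 0 < t + τ := fun t ht => by
    have := ht.1; linarith
  have hsplit : ∀ t ∈ Set.Icc (0:ℝ) 1, ∀ p : ℝ, (t + τ) ^ (p + 1) = (t + τ) ^ p * (t + τ) := by
    intro t ht p
    rw [Real.rpow_add (hupos t ht), Real.rpow_one]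
  have he2 : ∀ t ∈ Set.Icc (0:ℝ) 1, (t + τ) ^ (c - 1) = (t + τ) ^ (c - 2) * (t + τ) := by
    intro t ht
    have := hsplit t ht (c - 2); rw [show c - 2 + 1 = c - 1 by ring] at this; exact this
  have he1 : ∀ t ∈ Set.Icc (0:ℝ) 1, (t + τ) ^ c = (t + τ) ^ (c - 2) * (t + τ) ^ 2 := by
    intro t ht
    have h := hsplit t ht (c - 1); rw [show c - 1 + 1 = c by ring] at h
    rw [h, he2 t ht]; ring
  have hφderiv : ∀ t ∈ Set.Icc (0:ℝ) 1, HasDerivAt φ 0 t := by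
    intro t ht
    have hu := hupos t ht
    have hune : t + τ ≠ 0 := ne_of_gt hu
    have h1 : HasDerivAt (fun s : ℝ => s + τ) 1 t := (hasDerivAt_id t).add_const τ
    have heta : deriv (fun s : ℝ => (α / (s + τ)) ^ 2) t = -2 * α ^ 2 / (t + τ) ^ 3 := by
      have h2 : HasDerivAt (fun s : ℝ => α / (s + τ))
          ((0 * (t + τ) - α * 1) / (t + τ) ^ 2) t := (hasDerivAt_const t α).div h1 hune
      have h3 : HasDerivAt (fun s : ℝ => (α / (s + τ)) ^ 2) _ t := h2.pow 2
      rw [h3.deriv]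
      norm_num
      field_simp
    have hRt' := hR t ht
    rw [heta] at hRt'
    have hRt : HasDerivAt R (-(c / (t + τ)) * R t + b₁ * α ^ 2 / (t + τ) ^ 2
        + 2 * b₂ * α ^ 2 / (t + τ) ^ 3) t := by
      convert hRt' using 1
      rw [hcdef]
      field_simp
      ring
    have hp : ∀ p : ℝ, HasDerivAt (fun s : ℝ => (s + τ) ^ p) (p * (t + τ) ^ (p - 1)) t := by
      intro p
      have h := (Real.hasDerivAt_rpow_const (x := t + τ) (p := p) (Or.inl hune)).comp t h1
      simpa [Function.comp_def] using h
    have hmain2 := (((hp c).mul hRt).sub ((hp (c - 1)).const_mul d₁)).sub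
      ((hp (c - 2)).const_mul d₂)
    convert hmain2 using 1
    · rfl
    · rfl
    · exact hφ
    rw [show c - 1 - 1 = c - 2 by ring, show c - 2 - 1 = c - 3 by ring]
    have e3 : (t + τ) ^ (c - 2) = (t + τ) ^ (c - 3) * (t + τ) := by
      have := hsplit t ht (c - 3); rw [show c - 3 + 1 = c - 2 by ring] at this; exact this
    rw [he1 t ht, he2 t ht, e3, hd₁, hd₂]
    field_simp
    ring
  have hconst : ∀ t ∈ Set.Icc (0:ℝ) 1, φ t = φ 0 := by
    apply constant_of_has_deriv_right_zero
    · exact fun t ht => (hφderiv t ht).continuousAt.continuousWithinAt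
    · exact fun t ht => ((hφderiv t (Set.Ico_subset_Icc_self ht)).hasDerivWithinAt)
  have hid : ∀ t ∈ Set.Icc (0:ℝ) 1, (t + τ) ^ c * R t =
      τ ^ c * R₀ + d₁ * ((t + τ) ^ (c - 1) - τ ^ (c - 1))
        + d₂ * ((t + τ) ^ (c - 2) - τ ^ (c - 2)) := by
    intro t ht
    have h := hconst t ht
    simp only [hφ, zero_add, hR0] at h
    linarith [h]
  have hmono : ∀ t ∈ Set.Icc (0:ℝ) 1, ∀ p : ℝ, 0 ≤ p → τ ^ p ≤ (t + τ) ^ p := by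
    intro t ht p hpnn
    exact Real.rpow_le_rpow hτ.le (by linarith [ht.1]) hpnn
  -- main bounds
  have key : ∀ t ∈ Set.Icc (0:ℝ) 1, 0 ≤ R t ∧
      R t ≤ R₀ + d₁ / τ + d₂ / τ ^ 2 := by
    intro t ht
    have hu := hupos t ht
    have hτu : τ ≤ t + τ := by linarith [ht.1]
    have hP : 0 < (t + τ) ^ (c - 2) := Real.rpow_pos_of_pos hu _
    have hX : 0 < (t + τ) ^ (c - 2) * (t + τ) ^ 2 := by positivity
    have hT1 : τ ^ c ≤ (t + τ) ^ (c - 2) * (t + τ) ^ 2 := by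
      rw [← he1 t ht]; exact hmono t ht c (by linarith)
    have hT2 : τ ^ (c - 1) ≤ (t + τ) ^ (c - 2) * (t + τ) := by
      rw [← he2 t ht]; exact hmono t ht (c - 1) (by linarith)
    have hT3 : τ ^ (c - 2) ≤ (t + τ) ^ (c - 2) := hmono t ht (c - 2) (by linarith)
    have hidt := hid t ht
    rw [he1 t ht, he2 t ht] at hidt
    have hT1nn : (0:ℝ) ≤ τ ^ c := (Real.rpow_pos_of_pos hτ _).le
    have hT2nn : (0:ℝ) ≤ τ ^ (c - 1) := (Real.rpow_pos_of_pos hτ _).le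
    have hT3nn : (0:ℝ) ≤ τ ^ (c - 2) := (Real.rpow_pos_of_pos hτ _).le
    constructor
    · have hnn : 0 ≤ (t + τ) ^ (c - 2) * (t + τ) ^ 2 * R t := by
        rw [hidt]
        have h1 := mul_nonneg hd₁nn (sub_nonneg.mpr hT2)
        have h2 := mul_nonneg hd₂nn (sub_nonneg.mpr hT3)
        have h3 := mul_nonneg hT1nn hR₀
        linarith
      by_contra hneg
      push_neg at hneg
      nlinarith [mul_pos hX (neg_pos.mpr hneg)]
    · have hstep : (t + τ) ^ (c - 2) * (t + τ) ^ 2 * R t ≤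
          (t + τ) ^ (c - 2) * (t + τ) ^ 2 * (R₀ + d₁ / τ + d₂ / τ ^ 2) := by
        set s₁ := d₁ / τ with hs₁def
        set s₂ := d₂ / τ ^ 2 with hs₂def
        clear_value s₁ s₂
        have hd1s : d₁ = τ * s₁ := by rw [hs₁def]; field_simp
        have hd2s : d₂ = τ ^ 2 * s₂ := by rw [hs₂def]; field_simp
        have hs₁nn : 0 ≤ s₁ := by rw [hs₁def]; exact div_nonneg hd₁nn hτ.le
        have hs₂nn : 0 ≤ s₂ := by rw [hs₂def]; exact div_nonneg hd₂nn (by positivity)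
        rw [hd1s, hd2s] at hidt
        have k1 : 0 ≤ R₀ * ((t + τ) ^ (c - 2) * (t + τ) ^ 2 - τ ^ c) :=
          mul_nonneg hR₀ (by linarith)
        have k2 : 0 ≤ s₁ * ((t + τ) ^ (c - 2) * (t + τ)) * ((t + τ) - τ) :=
          mul_nonneg (mul_nonneg hs₁nn (by positivity)) (by linarith)
        have k3 : 0 ≤ s₂ * (t + τ) ^ (c - 2) * ((t + τ) ^ 2 - τ ^ 2) :=
          mul_nonneg (mul_nonneg hs₂nn hP.le)
            (sub_nonneg.mpr (pow_le_pow_left₀ hτ.le hτu 2))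
        have k4 : 0 ≤ τ * s₁ * τ ^ (c - 1) :=
          mul_nonneg (mul_nonneg hτ.le hs₁nn) hT2nn
        have k5 : 0 ≤ τ ^ 2 * s₂ * τ ^ (c - 2) :=
          mul_nonneg (mul_nonneg (by positivity) hs₂nn) hT3nn
        rw [hidt]
        linarith [k1, k2, k3, k4, k5]
      exact le_of_mul_le_mul_left hstep hX
  refine ⟨fun t ht => ⟨(key t ht).1, ?_⟩, ?_⟩
  · have h := (key t ht).2
    have e1 : b₁ * α ^ 2 / (τ * (c - 1)) = d₁ / τ := by rw [hd₁, div_div]; ring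
    have e2 : 2 * b₂ * α ^ 2 / (τ ^ 2 * (c - 2)) = d₂ / τ ^ 2 := by rw [hd₂, div_div]; ring
    rw [e1, e2]; exact h
  · -- at t = 1
    have h1mem : (1:ℝ) ∈ Set.Icc (0:ℝ) 1 := by norm_num
    have hu : (0:ℝ) < 1 + τ := by linarith
    have hidt := hid 1 h1mem
    have hP : 0 < ((1:ℝ) + τ) ^ (c - 2) := Real.rpow_pos_of_pos hu _
    have hX : 0 < ((1:ℝ) + τ) ^ c := Real.rpow_pos_of_pos hu _
    have hT2nn : (0:ℝ) ≤ τ ^ (c - 1) := (Real.rpow_pos_of_pos hτ _).le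
    have hT3nn : (0:ℝ) ≤ τ ^ (c - 2) := (Real.rpow_pos_of_pos hτ _).le
    have hgoalmul : ((1:ℝ) + τ) ^ c * ((τ / (1 + τ)) ^ c * R₀ + b₁ * α ^ 2 / ((1 + τ) * (c - 1))
        + 2 * b₂ * α ^ 2 / ((1 + τ) ^ 2 * (c - 2))) =
        τ ^ c * R₀ + d₁ * ((1:ℝ) + τ) ^ (c - 1) + d₂ * ((1:ℝ) + τ) ^ (c - 2) := by
      rw [Real.div_rpow hτ.le hu.le, he1 1 h1mem, he2 1 h1mem, hd₁, hd₂]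
      field_simp
    have hstep : ((1:ℝ) + τ) ^ c * R 1 ≤
        τ ^ c * R₀ + d₁ * ((1:ℝ) + τ) ^ (c - 1) + d₂ * ((1:ℝ) + τ) ^ (c - 2) := by
      rw [hidt]
      have k4 : 0 ≤ d₁ * τ ^ (c - 1) := mul_nonneg hd₁nn hT2nn
      have k5 : 0 ≤ d₂ * τ ^ (c - 2) := mul_nonneg hd₂nn hT3nn
      linarith
    rw [← hgoalmul] at hstep
    exact le_of_mul_le_mul_left hstep hX
end

section
/- Let κ₁ > 1, α ≥ 0, K := κ₁(α+1), and 0 ≤ b ≤ K/(2(K+1)). Define f(a) := min( −a κ₁, 1 + a/(α+1), 2 − 2b + 2a/(α+1) ) for a ∈ ℝ. Then sup_{a ∈ ℝ} f(a) = K/(K+1), the supremum is attained at a* = −(α+1)/(K+1), and a* ∈ [−1, 0]. -/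
open Real

/-- Exponent optimization for the scaling laws, regime where privacy comes for free:
for `κ₁ > 1`, `α ≥ 0`, `K = κ₁(α+1)`, and `0 ≤ b ≤ K/(2(K+1))`, the function
`f(a) = min(−aκ₁, 1 + a/(α+1), 2 − 2b + 2a/(α+1))` has supremum `K/(K+1)`,
attained at `a* = −(α+1)/(K+1) ∈ [−1, 0]`. -/
theorem exponent_optimization_free_privacy (κ₁ α b : ℝ) (hκ : 1 < κ₁) (hα : 0 ≤ α)
    (hb0 : 0 ≤ b) (hb : b ≤ κ₁ * (α + 1) / (2 * (κ₁ * (α + 1) + 1))) :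
    IsGreatest
      (Set.range fun a : ℝ =>
        min (min (-a * κ₁) (1 + a / (α + 1))) (2 - 2 * b + 2 * a / (α + 1)))
      (κ₁ * (α + 1) / (κ₁ * (α + 1) + 1)) ∧
    min (min (-(-(α + 1) / (κ₁ * (α + 1) + 1)) * κ₁)
        (1 + (-(α + 1) / (κ₁ * (α + 1) + 1)) / (α + 1)))
        (2 - 2 * b + 2 * (-(α + 1) / (κ₁ * (α + 1) + 1)) / (α + 1))
      = κ₁ * (α + 1) / (κ₁ * (α + 1) + 1) ∧
    -1 ≤ -(α + 1) / (κ₁ * (α + 1) + 1) ∧ -(α + 1) / (κ₁ * (α + 1) + 1) ≤ 0 := by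
  have hA : (0:ℝ) < α + 1 := by linarith
  have hK : (0:ℝ) < κ₁ * (α + 1) + 1 := by nlinarith
  have h1 : -(-(α + 1) / (κ₁ * (α + 1) + 1)) * κ₁ = κ₁ * (α + 1) / (κ₁ * (α + 1) + 1) := by
    field_simp
  have h2 : 1 + (-(α + 1) / (κ₁ * (α + 1) + 1)) / (α + 1)
      = κ₁ * (α + 1) / (κ₁ * (α + 1) + 1) := by
    field_simp
    ring
  have hb' : b * (2 * (κ₁ * (α + 1) + 1)) ≤ κ₁ * (α + 1) := by
    rwa [le_div_iff₀ (by positivity)] at hb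
  have h3 : κ₁ * (α + 1) / (κ₁ * (α + 1) + 1)
      ≤ 2 - 2 * b + 2 * (-(α + 1) / (κ₁ * (α + 1) + 1)) / (α + 1) := by
    have key : 2 - 2 * b + 2 * (-(α + 1) / (κ₁ * (α + 1) + 1)) / (α + 1)
        - κ₁ * (α + 1) / (κ₁ * (α + 1) + 1)
        = (κ₁ * (α + 1) - b * (2 * (κ₁ * (α + 1) + 1))) / (κ₁ * (α + 1) + 1) := by
      field_simp
      ring
    have := div_nonneg (by linarith : (0:ℝ) ≤ κ₁ * (α + 1) - b * (2 * (κ₁ * (α + 1) + 1))) hK.le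
    linarith
  have hval : min (min (-(-(α + 1) / (κ₁ * (α + 1) + 1)) * κ₁)
        (1 + (-(α + 1) / (κ₁ * (α + 1) + 1)) / (α + 1)))
        (2 - 2 * b + 2 * (-(α + 1) / (κ₁ * (α + 1) + 1)) / (α + 1))
      = κ₁ * (α + 1) / (κ₁ * (α + 1) + 1) := by
    rw [h1, h2, min_self, min_eq_left h3]
  refine ⟨⟨⟨-(α + 1) / (κ₁ * (α + 1) + 1), hval⟩, ?_⟩, hval, ?_, ?_⟩
  · rintro x ⟨a, rfl⟩
    simp only
    by_cases h : a ≤ -(α + 1) / (κ₁ * (α + 1) + 1)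
    · refine le_trans (le_trans (min_le_left _ _) (min_le_right _ _)) ?_
      rw [← h2]
      have : a / (α + 1) ≤ (-(α + 1) / (κ₁ * (α + 1) + 1)) / (α + 1) := by gcongr
      linarith
    · push_neg at h
      refine le_trans (le_trans (min_le_left _ _) (min_le_left _ _)) ?_
      rw [← h1]
      have hκ0 : (0:ℝ) ≤ κ₁ := by linarith
      exact mul_le_mul_of_nonneg_right (by linarith) hκ0
  · rw [neg_div, neg_le_neg_iff, div_le_one hK]
    nlinarith
  · rw [neg_div, neg_nonpos]
    positivity
end

section
/- Let κ₁ > 1, α ≥ 0, K := κ₁(α+1), and K/(2(K+1)) < b < 1. Define f(a) := min( −a κ₁, 1 + a/(α+1), 2 − 2b + 2a/(α+1) ) for a ∈ ℝ. Then sup_{a ∈ ℝ} f(a) = 2K(1−b)/(K+2), the supremum is attained at a* = −2(1−b)(α+1)/(K+2), and a* ∈ [−1, 0]. -/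
open Real

/-- Exponent optimization for the scaling laws, privacy-dominated regime:
for `κ₁ > 1`, `α ≥ 0`, `K = κ₁(α+1)`, and `K/(2(K+1)) < b < 1`, the function
`f(a) = min(−aκ₁, 1 + a/(α+1), 2 − 2b + 2a/(α+1))` has supremum `2K(1−b)/(K+2)`,
attained at `a* = −2(1−b)(α+1)/(K+2) ∈ [−1, 0]`. -/
theorem exponent_optimization_privacy_cost (κ₁ α b : ℝ) (hκ : 1 < κ₁) (hα : 0 ≤ α)
    (hb0 : κ₁ * (α + 1) / (2 * (κ₁ * (α + 1) + 1)) < b) (hb1 : b < 1) :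
    IsGreatest
      (Set.range fun a : ℝ =>
        min (min (-a * κ₁) (1 + a / (α + 1))) (2 - 2 * b + 2 * a / (α + 1)))
      (2 * (κ₁ * (α + 1)) * (1 - b) / (κ₁ * (α + 1) + 2)) ∧
    min (min (-(-2 * (1 - b) * (α + 1) / (κ₁ * (α + 1) + 2)) * κ₁)
        (1 + (-2 * (1 - b) * (α + 1) / (κ₁ * (α + 1) + 2)) / (α + 1)))
        (2 - 2 * b + 2 * (-2 * (1 - b) * (α + 1) / (κ₁ * (α + 1) + 2)) / (α + 1))
      = 2 * (κ₁ * (α + 1)) * (1 - b) / (κ₁ * (α + 1) + 2) ∧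
    -1 ≤ -2 * (1 - b) * (α + 1) / (κ₁ * (α + 1) + 2) ∧
    -2 * (1 - b) * (α + 1) / (κ₁ * (α + 1) + 2) ≤ 0 := by
  have hA0 : (0:ℝ) < α + 1 := by linarith
  have hK1 : 1 < κ₁ * (α + 1) := by nlinarith
  have hK2 : (0:ℝ) < κ₁ * (α + 1) + 2 := by linarith
  have hKp1 : (0:ℝ) < 2 * (κ₁ * (α + 1) + 1) := by linarith
  -- key consequence of hb0 : K < 2b(K+1)
  have hb0' : κ₁ * (α + 1) < b * (2 * (κ₁ * (α + 1) + 1)) := by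
    exact (div_lt_iff₀ hKp1).mp hb0
  -- value of the three terms at a*
  have ht1 : -(-2 * (1 - b) * (α + 1) / (κ₁ * (α + 1) + 2)) * κ₁
      = 2 * (κ₁ * (α + 1)) * (1 - b) / (κ₁ * (α + 1) + 2) := by
    field_simp
  have ht3 : 2 - 2 * b + 2 * (-2 * (1 - b) * (α + 1) / (κ₁ * (α + 1) + 2)) / (α + 1)
      = 2 * (κ₁ * (α + 1)) * (1 - b) / (κ₁ * (α + 1) + 2) := by
    field_simp
    ring
  have ht2 : 2 * (κ₁ * (α + 1)) * (1 - b) / (κ₁ * (α + 1) + 2)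
      ≤ 1 + (-2 * (1 - b) * (α + 1) / (κ₁ * (α + 1) + 2)) / (α + 1) := by
    have h : (-2 * (1 - b) * (α + 1) / (κ₁ * (α + 1) + 2)) / (α + 1)
        = -2 * (1 - b) / (κ₁ * (α + 1) + 2) := by
      field_simp
    rw [h, div_le_iff₀ hK2]
    have h2 : (1 + -2 * (1 - b) / (κ₁ * (α + 1) + 2)) * (κ₁ * (α + 1) + 2)
        = κ₁ * (α + 1) + 2 - 2 * (1 - b) := by field_simp; ring
    rw [h2]
    nlinarith
  have hval : min (min (-(-2 * (1 - b) * (α + 1) / (κ₁ * (α + 1) + 2)) * κ₁)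
        (1 + (-2 * (1 - b) * (α + 1) / (κ₁ * (α + 1) + 2)) / (α + 1)))
        (2 - 2 * b + 2 * (-2 * (1 - b) * (α + 1) / (κ₁ * (α + 1) + 2)) / (α + 1))
      = 2 * (κ₁ * (α + 1)) * (1 - b) / (κ₁ * (α + 1) + 2) := by
    rw [ht1, ht3, min_eq_left ht2, min_self]
  refine ⟨⟨⟨-2 * (1 - b) * (α + 1) / (κ₁ * (α + 1) + 2), hval⟩, ?_⟩, hval, ?_, ?_⟩
  · rintro y ⟨a, rfl⟩
    simp only
    have h1 : min (min (-a * κ₁) (1 + a / (α + 1))) (2 - 2 * b + 2 * a / (α + 1))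
        ≤ -a * κ₁ := le_trans (min_le_left _ _) (min_le_left _ _)
    have h3 : min (min (-a * κ₁) (1 + a / (α + 1))) (2 - 2 * b + 2 * a / (α + 1))
        ≤ 2 - 2 * b + 2 * a / (α + 1) := min_le_right _ _
    have key : 2 * (-a * κ₁) + (κ₁ * (α + 1)) * (2 - 2 * b + 2 * a / (α + 1))
        = (κ₁ * (α + 1) + 2) * (2 * (κ₁ * (α + 1)) * (1 - b) / (κ₁ * (α + 1) + 2)) := by
      field_simp
      ring
    nlinarith [h1, h3, key]
  · rw [neg_le, ← neg_div, div_le_one hK2]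
    nlinarith [mul_pos hA0 (sub_pos.mpr hb1)]
  · rw [div_le_iff₀ hK2]
    nlinarith
end

section
/- For every ζ > 0, A > 0 and c₀ > 0 there exist constants C > 0, C' > 0 and ε₀ > 0 such that the following holds. Let γ ∈ (0, 1/2), λmin ∈ (0, 1], λmax ≥ 1 satisfy (λmax/λmin²) · γ · ln(1/γ) ≤ ε₀, let c ∈ (0, c₀], let v > 0 satisfy v·c = C ln(1/γ)/λmin, and let R₀ ∈ [0, A]. If R̄ : [0,1] → ℝ is differentiable with R̄(0) = R₀ and R̄'(t) = −2 λmin v μ_c(R̄(t)) R̄(t) + λmax v² ν_c(R̄(t)) (R̄(t) + ζ²/2) γ for all t ∈ [0,1], then R̄(1) ≤ C' (λmax/λmin²) γ ln(1/γ). -/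
open MeasureTheory Real

/-- Descent reduction factor `μ_c(R) = erf(c'(R)/√2)` with `c'(R) = c/√(2R+ζ²)`. -/
noncomputable def mu (ζ c R : ℝ) : ℝ := erf (c / Real.sqrt (2 * R + ζ ^ 2) / Real.sqrt 2)

/-- Variance reduction factor `ν_c(R) = c'(R)²(1 − erf(c'(R)/√2)) + F(c'(R))`. -/
noncomputable def nu (ζ c R : ℝ) : ℝ :=
  (c / Real.sqrt (2 * R + ζ ^ 2)) ^ 2 *
      (1 - erf (c / Real.sqrt (2 * R + ζ ^ 2) / Real.sqrt 2))
    + F (c / Real.sqrt (2 * R + ζ ^ 2))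

/-!
Compare `R` with the relaxation barrier `y t = (R₀ - ρ) e^{-2Lt} + ρ`, where `L = ln(1/γ)` and
`ρ = (C²/2)(λmax/λmin²) γ L`. While `R ∈ [0, A + 1]`, the Gaussian bounds
`√(2/π) z e^{-z²/2} ≤ erf(z/√2) ≤ √(2/π) z` give `λmin v μ_c(R) ≥ L` (this is what fixes `C`) and
`ν_c(R) (R + ζ²/2) ≤ c²/2`, which bounds the noise term by `L ρ`. So `R' < -2L (R - ρ)` wherever
`R` touches the barrier, and `R 1 ≤ (R₀ - ρ) γ² + ρ ≤ A γ² + ρ = O((λmax/λmin²) γ ln(1/γ))`.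
-/

open Set

theorem le_relaxation_of_deriv_lt {f f' : ℝ → ℝ} {κ ρ T : ℝ} (hκ : 0 ≤ κ)
    (hf : ∀ t ∈ Icc 0 T, HasDerivAt f (f' t) t)
    (hdrift : ∀ t ∈ Ico 0 T, f t ∈ uIcc (f 0) ρ → f' t < -κ * (f t - ρ)) :
    ∀ t ∈ Icc 0 T, f t ≤ (f 0 - ρ) * exp (-κ * t) + ρ := by
  set y : ℝ → ℝ := fun t => (f 0 - ρ) * exp (-κ * t) + ρ
  have hy : ∀ t, HasDerivAt y (-κ * (y t - ρ)) t := fun t => by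
    have h := (((hasDerivAt_id t).const_mul (-κ)).exp.const_mul (f 0 - ρ)).add_const ρ
    simp only [id, mul_one] at h
    exact h.congr_deriv (by simp only [y]; ring)
  have hy_mem : ∀ t, 0 ≤ t → y t ∈ uIcc (f 0) ρ := fun t ht => by
    have he : exp (-κ * t) ≤ 1 := exp_le_one_iff.2 (by nlinarith)
    have he' := (exp_pos (-κ * t)).le
    rcases le_total (f 0) ρ with h | h
    · rw [uIcc_of_le h]; constructor <;> simp only [y] <;> nlinarith
    · rw [uIcc_of_ge h]; constructor <;> simp only [y] <;> nlinarith
  refine image_le_of_deriv_right_lt_deriv_boundary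
    (fun t ht => (hf t ht).continuousAt.continuousWithinAt)
    (fun t ht => (hf t (Ico_subset_Icc_self ht)).hasDerivWithinAt) (by simp) hy ?_
  intro t ht hft
  rw [show y t = f t from hft.symm]
  exact hdrift t ht (hft ▸ hy_mem t ht.1)

theorem intervalIntegrable_exp_neg_sq (a b : ℝ) :
    IntervalIntegrable (fun t : ℝ => exp (-t ^ 2)) volume a b :=
  (by fun_prop : Continuous fun t : ℝ => exp (-t ^ 2)).intervalIntegrable a b

theorem integral_exp_neg_sq_le {x : ℝ} (hx : 0 ≤ x) : ∫ t in (0:ℝ)..x, exp (-t ^ 2) ≤ x := by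
  simpa using intervalIntegral.integral_mono_on hx (intervalIntegrable_exp_neg_sq 0 x)
    intervalIntegrable_const
    fun t _ => exp_le_one_iff.2 (neg_nonpos.2 (sq_nonneg t))

theorem mul_exp_neg_sq_le_integral {x : ℝ} (hx : 0 ≤ x) :
    x * exp (-x ^ 2) ≤ ∫ t in (0:ℝ)..x, exp (-t ^ 2) := by
  simpa using intervalIntegral.integral_mono_on hx intervalIntegrable_const
    (intervalIntegrable_exp_neg_sq 0 x)
    fun t ht => exp_le_exp.2 (neg_le_neg (pow_le_pow_left₀ ht.1 ht.2 2))

theorem two_div_sqrt_pi_mul_div_sqrt_two (z : ℝ) : 2 / √π * (z / √2) = √(2 / π) * z := by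
  have h2 : (2 : ℝ) = √2 * √2 := (mul_self_sqrt zero_le_two).symm
  rw [sqrt_div zero_le_two]
  field_simp
  nth_rw 1 [h2]
  ring

theorem erf_div_sqrt_two_le {z : ℝ} (hz : 0 ≤ z) : erf (z / √2) ≤ √(2 / π) * z := by
  rw [erf, ← two_div_sqrt_pi_mul_div_sqrt_two]
  gcongr
  exact integral_exp_neg_sq_le (by positivity)

theorem le_erf_div_sqrt_two {z : ℝ} (hz : 0 ≤ z) :
    √(2 / π) * z * exp (-z ^ 2 / 2) ≤ erf (z / √2) := by
  have hsq : (z / √2) ^ 2 = z ^ 2 / 2 := by rw [div_pow, sq_sqrt zero_le_two]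
  rw [erf, ← two_div_sqrt_pi_mul_div_sqrt_two, mul_assoc, neg_div, ← hsq]
  gcongr
  exact mul_exp_neg_sq_le_integral (by positivity)

theorem sq_mul_one_sub_erf_add_F_le {z : ℝ} (hz : 0 ≤ z) :
    z ^ 2 * (1 - erf (z / √2)) + F z ≤ z ^ 2 := by
  have hlow := le_erf_div_sqrt_two hz
  suffices (1 - z ^ 2) * erf (z / √2) ≤ √(2 / π) * z * exp (-z ^ 2 / 2) by
    rw [F]; linarith
  rcases le_or_gt 1 (z ^ 2) with hz1 | hz1
  · have : 0 ≤ √(2 / π) * z * exp (-z ^ 2 / 2) := by positivity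
    nlinarith
  · have hexp_ge : 1 - z ^ 2 ≤ exp (-z ^ 2 / 2) := by
      linarith [add_one_le_exp (-z ^ 2 / 2), sq_nonneg z]
    calc (1 - z ^ 2) * erf (z / √2) ≤ (1 - z ^ 2) * (√(2 / π) * z) := by
          gcongr
          exact erf_div_sqrt_two_le hz
      _ ≤ exp (-z ^ 2 / 2) * (√(2 / π) * z) := by gcongr
      _ = √(2 / π) * z * exp (-z ^ 2 / 2) := by ring

noncomputable def normalizedClip (ζ c R : ℝ) : ℝ := c / √(2 * R + ζ ^ 2)

theorem mu_eq (ζ c R : ℝ) : mu ζ c R = erf (normalizedClip ζ c R / √2) := rfl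

theorem nu_eq (ζ c R : ℝ) :
    nu ζ c R = normalizedClip ζ c R ^ 2 * (1 - erf (normalizedClip ζ c R / √2))
      + F (normalizedClip ζ c R) := rfl

theorem normalizedClip_nonneg {ζ c R : ℝ} (hc : 0 ≤ c) : 0 ≤ normalizedClip ζ c R := by
  unfold normalizedClip; positivity

theorem sq_normalizedClip {ζ c R : ℝ} (hR : 0 < 2 * R + ζ ^ 2) :
    normalizedClip ζ c R ^ 2 = c ^ 2 / (2 * R + ζ ^ 2) := by
  rw [normalizedClip, div_pow, sq_sqrt hR.le]

theorem nu_mul_le {ζ c R : ℝ} (hc : 0 ≤ c) (hR : 0 < 2 * R + ζ ^ 2) :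
    nu ζ c R * (R + ζ ^ 2 / 2) ≤ c ^ 2 / 2 := by
  have hnu : nu ζ c R ≤ c ^ 2 / (2 * R + ζ ^ 2) := by
    rw [nu_eq, ← sq_normalizedClip hR]
    exact sq_mul_one_sub_erf_add_F_le (normalizedClip_nonneg hc)
  calc nu ζ c R * (R + ζ ^ 2 / 2) ≤ c ^ 2 / (2 * R + ζ ^ 2) * (R + ζ ^ 2 / 2) := by
        gcongr; linarith
    _ = c ^ 2 / 2 := by field_simp

theorem le_const_mul_mu {ζ c c₀ R B : ℝ} (hζ : 0 < ζ) (hc : 0 < c) (hcc₀ : c ≤ c₀) (hR : 0 ≤ R)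
    (hRB : R ≤ B) :
    c ≤ √(2 * B + ζ ^ 2) / (√(2 / π) * exp (-(c₀ / ζ) ^ 2 / 2)) * mu ζ c R := by
  set z := normalizedClip ζ c R
  have hRζ : ζ ^ 2 ≤ 2 * R + ζ ^ 2 := by linarith
  have hB : 0 < 2 * B + ζ ^ 2 := by linarith [pow_pos hζ 2]
  have hz : 0 ≤ z := normalizedClip_nonneg hc.le
  have hzM : z ≤ c₀ / ζ := by
    refine div_le_div₀ (hc.trans_le hcc₀).le hcc₀ hζ ?_
    simpa [sqrt_sq hζ.le] using sqrt_le_sqrt hRζ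
  have hBz : c / √(2 * B + ζ ^ 2) ≤ z :=
    div_le_div_of_nonneg_left hc.le (sqrt_pos.2 (by positivity)) (sqrt_le_sqrt (by linarith))
  have hκ : 0 < √(2 / π) * exp (-(c₀ / ζ) ^ 2 / 2) := by positivity
  have hmu : √(2 / π) * exp (-(c₀ / ζ) ^ 2 / 2) * z ≤ mu ζ c R := by
    calc √(2 / π) * exp (-(c₀ / ζ) ^ 2 / 2) * z ≤ √(2 / π) * z * exp (-z ^ 2 / 2) := by
          rw [mul_right_comm]
          refine mul_le_mul_of_nonneg_left (exp_le_exp.2 ?_) (by positivity)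
          gcongr
      _ ≤ erf (z / √2) := le_erf_div_sqrt_two hz
      _ = mu ζ c R := (mu_eq ζ c R).symm
  calc c = √(2 * B + ζ ^ 2) / (√(2 / π) * exp (-(c₀ / ζ) ^ 2 / 2))
        * (√(2 / π) * exp (-(c₀ / ζ) ^ 2 / 2) * (c / √(2 * B + ζ ^ 2))) := by
        have : 0 < √(2 * B + ζ ^ 2) := sqrt_pos.2 hB
        field_simp
    _ ≤ _ := by
        refine mul_le_mul_of_nonneg_left ((mul_le_mul_of_nonneg_left hBz hκ.le).trans hmu) ?_
        positivity

theorem risk_drift_lt_relaxation {ζ c C γ lmin lmax v L r : ℝ} (hζ : 0 < ζ) (hc : 0 < c)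
    (hr : 0 ≤ r) (hγ : 0 < γ) (hlmin : 0 < lmin) (hlmax : 0 < lmax) (hL : 0 < L) (hv : 0 < v)
    (hC : 0 < C) (hμ : c ≤ C * mu ζ c r) (hvc : v * c = C * L / lmin) :
    -2 * lmin * v * mu ζ c r * r + lmax * v ^ 2 * nu ζ c r * (r + ζ ^ 2 / 2) * γ
      < -(2 * L) * (r - C ^ 2 / 2 * (lmax / lmin ^ 2 * γ * L)) := by
  have hdescent : L ≤ lmin * v * mu ζ c r := by
    refine le_of_mul_le_mul_left ?_ hC
    calc C * L = lmin * (v * c) := by rw [hvc]; field_simp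
      _ ≤ lmin * (v * (C * mu ζ c r)) := by gcongr
      _ = C * (lmin * v * mu ζ c r) := by ring
  have hnoise : lmax * v ^ 2 * nu ζ c r * (r + ζ ^ 2 / 2) * γ
      ≤ L * (C ^ 2 / 2 * (lmax / lmin ^ 2 * γ * L)) := by
    calc lmax * v ^ 2 * nu ζ c r * (r + ζ ^ 2 / 2) * γ
        = lmax * γ * v ^ 2 * (nu ζ c r * (r + ζ ^ 2 / 2)) := by ring
      _ ≤ lmax * γ * v ^ 2 * (c ^ 2 / 2) := by
          gcongr; exact nu_mul_le hc.le (by positivity)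
      _ = lmax * γ * (v * c) ^ 2 / 2 := by ring
      _ = L * (C ^ 2 / 2 * (lmax / lmin ^ 2 * γ * L)) := by rw [hvc]; field_simp
  have hρL : 0 < L * (C ^ 2 / 2 * (lmax / lmin ^ 2 * γ * L)) := by positivity
  nlinarith [mul_le_mul_of_nonneg_right hdescent hr]

theorem log_two_le_log_one_div {γ : ℝ} (hγ : 0 < γ) (hγ2 : γ < 1 / 2) :
    log 2 ≤ log (1 / γ) :=
  log_le_log two_pos (by rw [le_div_iff₀ hγ]; linarith)

theorem exp_neg_two_mul_log_one_div {γ : ℝ} (hγ : 0 < γ) :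
    exp (-(2 * log (1 / γ))) = γ ^ 2 := by
  rw [one_div, log_inv, mul_neg, neg_neg, two_mul, exp_add, exp_log hγ, sq]

theorem mul_log_two_le {γ lmin lmax : ℝ} (hγ : 0 < γ) (hγ2 : γ < 1 / 2) (hlmin : 0 < lmin)
    (hlmin1 : lmin ≤ 1) (hlmax : 1 ≤ lmax) :
    γ * log 2 ≤ lmax / lmin ^ 2 * γ * log (1 / γ) := by
  have hratio : 1 ≤ lmax / lmin ^ 2 := by
    rw [one_le_div (by positivity)]; nlinarith
  calc γ * log 2 ≤ γ * log (1 / γ) :=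
        mul_le_mul_of_nonneg_left (log_two_le_log_one_div hγ hγ2) hγ.le
    _ ≤ lmax / lmin ^ 2 * γ * log (1 / γ) := by
        rw [mul_assoc]
        have hL := (log_pos one_lt_two).trans_le (log_two_le_log_one_div hγ hγ2)
        exact le_mul_of_one_le_left (mul_nonneg hγ.le hL.le) hratio

theorem relaxation_endpoint_le {A R₀ ρ γ E : ℝ} (hA : 0 ≤ A) (hR₀A : R₀ ≤ A) (hρ : 0 ≤ ρ)
    (hγ : 0 ≤ γ) (hγ1 : γ ≤ 1) (hE : γ * log 2 ≤ E) :
    (R₀ - ρ) * γ ^ 2 + ρ ≤ A / log 2 * E + ρ := by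
  have hlog2 : 0 < log 2 := log_pos one_lt_two
  calc (R₀ - ρ) * γ ^ 2 + ρ ≤ A * γ + ρ := by
        have hγsq : γ ^ 2 ≤ γ := by nlinarith
        linarith [mul_le_mul_of_nonneg_right (by linarith : R₀ - ρ ≤ A) (sq_nonneg γ),
          mul_le_mul_of_nonneg_left hγsq hA]
    _ = A / log 2 * (γ * log 2) + ρ := by field_simp
    _ ≤ A / log 2 * E + ρ := by gcongr

theorem output_perturbation_ode_upper_bound_general (ζ A c₀ : ℝ) (hζ : 0 < ζ) (hA : 0 < A) :
    ∃ C C' ε₀ : ℝ, 0 < C ∧ 0 < C' ∧ 0 < ε₀ ∧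
      ∀ γ lmin lmax c v R₀ : ℝ,
        0 < γ → γ < 1 / 2 → 0 < lmin → lmin ≤ 1 → 1 ≤ lmax →
        lmax / lmin ^ 2 * γ * Real.log (1 / γ) ≤ ε₀ →
        0 < c → c ≤ c₀ → 0 < v → v * c = C * Real.log (1 / γ) / lmin →
        0 ≤ R₀ → R₀ ≤ A →
        ∀ R : ℝ → ℝ, R 0 = R₀ →
          (∀ t ∈ Set.Icc (0:ℝ) 1,
            HasDerivAt R
              (-2 * lmin * v * mu ζ c (R t) * R t
                + lmax * v ^ 2 * nu ζ c (R t) * (R t + ζ ^ 2 / 2) * γ) t) →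
          R 1 ≤ C' * (lmax / lmin ^ 2) * γ * Real.log (1 / γ) := by
  set C := √(2 * (A + 1) + ζ ^ 2) / (√(2 / π) * exp (-(c₀ / ζ) ^ 2 / 2))
  have hC : 0 < C := div_pos (sqrt_pos.2 (by positivity)) (by positivity)
  refine ⟨C, A / log 2 + C ^ 2, 2 / C ^ 2, hC, by positivity, by positivity, ?_⟩
  intro γ lmin lmax c v R₀ hγ hγ2 hlmin hlmin1 hlmax hε hc hcc₀ hv hvc hR₀ hR₀A R hR0 hR
  have hL : 0 < log (1 / γ) := (log_pos one_lt_two).trans_le (log_two_le_log_one_div hγ hγ2)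
  set E := lmax / lmin ^ 2 * γ * log (1 / γ)
  have hρ1 : C ^ 2 / 2 * E ≤ 1 := by
    calc C ^ 2 / 2 * E ≤ C ^ 2 / 2 * (2 / C ^ 2) := mul_le_mul_of_nonneg_left hε (by positivity)
      _ = 1 := by field_simp
  have hbarrier := le_relaxation_of_deriv_lt (κ := 2 * log (1 / γ)) (ρ := C ^ 2 / 2 * E)
    (by positivity) hR
    (fun t _ hmem => by
      have hRt := uIcc_subset_Icc (a₂ := 0) (b₂ := A + 1) ⟨hR0 ▸ hR₀, by linarith⟩
        ⟨by positivity, by linarith⟩ hmem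
      exact risk_drift_lt_relaxation hζ hc hRt.1 hγ hlmin (by linarith) hL hv hC
        (le_const_mul_mu hζ hc hcc₀ hRt.1 hRt.2) hvc)
    1 ⟨zero_le_one, le_rfl⟩
  rw [hR0, mul_one, exp_neg_two_mul_log_one_div hγ] at hbarrier
  have hend := relaxation_endpoint_le (ρ := C ^ 2 / 2 * E) hA.le hR₀A (by positivity) hγ.le
    (by linarith) (mul_log_two_le hγ hγ2 hlmin hlmin1 hlmax)
  have hE : 0 ≤ E := by positivity
  calc R 1 ≤ A / log 2 * E + C ^ 2 / 2 * E := hbarrier.trans hend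
    _ ≤ (A / log 2 + C ^ 2) * (lmax / lmin ^ 2) * γ * log (1 / γ) := by nlinarith

/-- Final-risk upper bound for the deterministic equivalent of output-perturbation DP-GD
(constant learning rate schedule) with the optimal hyper-parameter choice
`v·c = C ln(1/γ)/λmin`: the final risk is `O((λmax/λmin²) γ ln(1/γ))`. -/
theorem output_perturbation_ode_upper_bound (ζ A c₀ : ℝ) (hζ : 0 < ζ) (hA : 0 < A)
    (hc₀ : 0 < c₀) :
    ∃ C C' ε₀ : ℝ, 0 < C ∧ 0 < C' ∧ 0 < ε₀ ∧
      ∀ γ lmin lmax c v R₀ : ℝ,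
        0 < γ → γ < 1 / 2 → 0 < lmin → lmin ≤ 1 → 1 ≤ lmax →
        lmax / lmin ^ 2 * γ * Real.log (1 / γ) ≤ ε₀ →
        0 < c → c ≤ c₀ → 0 < v → v * c = C * Real.log (1 / γ) / lmin →
        0 ≤ R₀ → R₀ ≤ A →
        ∀ R : ℝ → ℝ, R 0 = R₀ →
          (∀ t ∈ Set.Icc (0:ℝ) 1,
            HasDerivAt R
              (-2 * lmin * v * mu ζ c (R t) * R t
                + lmax * v ^ 2 * nu ζ c (R t) * (R t + ζ ^ 2 / 2) * γ) t) →
          R 1 ≤ C' * (lmax / lmin ^ 2) * γ * Real.log (1 / γ) :=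
  output_perturbation_ode_upper_bound_general ζ A c₀ hζ hA
end
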